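/- arXiv:1504.06327 — 11 statements merged into one kernel-verified Lean document; each statement's English description precedes it below -/
import Mathlib

section
/- Fix an integer m ≥ 1 and let Y ∈ ℚ⟦X⟧ be the Fuss–Catalan generating series Y := ∑_{n≥0} (1/(mn+1))·C((m+1)n, n)·Xⁿ. Then Y satisfies the polynomial equation Y = 1 + X·Y^{m+1} in ℚ⟦X⟧. -/
/-!
Write `t = m + 1`. The Rothe numbers `R_x(k) = x/(x + t k) · C(x + t k, k)` satisfy the Pascal
recurrence `R_{x+1}(k+1) = R_x(k+1) + R_{x+t}(k)` with `R_0 = δ₀`, so their series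
`F_x = ∑ R_x(k) Xᵏ` satisfy `F_0 = 1` and `F_{x+1} = F_x + X·F_{x+t}`. Induction on the
coefficient index and then on `x` turns this into `F_x · F_y = F_{x+y}`, hence `F_x = F_1 ^ x`.
Since `F_1 = Y`, the recurrence at `x = 0` reads `Y = 1 + X·Y^t`.
-/

open PowerSeries

namespace FussCatalan

/-- `rothe m x k = x/(x + k(m+1)) · C(x + k(m+1), k)`, written without division so that it
also makes sense at `x = 0`. -/
def rothe (m x : ℕ) : ℕ → ℚ
  | 0 => 1
  | j + 1 => (x + (j + 1) * (m + 1)).choose (j + 1) - (m + 1) * (x + j * (m + 1) + m).choose j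

@[simp]
lemma rothe_zero_right (m x : ℕ) : rothe m x 0 = 1 := rfl

lemma rothe_succ (m x j : ℕ) :
    rothe m x (j + 1) =
      (x + (j + 1) * (m + 1)).choose (j + 1) - (m + 1) * (x + j * (m + 1) + m).choose j :=
  rfl

lemma add_one_mul_choose_mul_add_one (m j : ℕ) :
    (m + 1) * (j * (m + 1) + m).choose j = ((j + 1) * (m + 1)).choose (j + 1) := by
  apply Nat.eq_of_mul_eq_mul_right (Nat.add_one_pos j)
  rw [show (j + 1) * (m + 1) = j * (m + 1) + m + 1 by ring, ← Nat.add_one_mul_choose_eq]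
  ring

lemma rothe_zero_left_succ (m j : ℕ) : rothe m 0 (j + 1) = 0 := by
  rw [rothe_succ, zero_add, zero_add, sub_eq_zero]
  exact_mod_cast (add_one_mul_choose_mul_add_one m j).symm

lemma rothe_succ_succ (m x j : ℕ) :
    rothe m (x + 1) (j + 1) = rothe m x (j + 1) + rothe m (x + m + 1) j := by
  rcases j with _ | i
  · simp only [rothe_succ, rothe_zero_right, zero_add, zero_mul, one_mul, Nat.choose_one_right,
      Nat.choose_zero_right]
    push_cast
    ring
  · set N := x + (i + 1) * (m + 1) + m
    simp only [rothe_succ]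
    rw [show x + 1 + (i + 1 + 1) * (m + 1) = N + 1 + 1 by ring,
      show x + (i + 1 + 1) * (m + 1) = N + 1 by ring,
      show x + 1 + (i + 1) * (m + 1) + m = N + 1 by ring,
      show x + m + 1 + (i + 1) * (m + 1) = N + 1 by ring,
      show x + m + 1 + i * (m + 1) + m = N by ring,
      Nat.choose_succ_succ' (N + 1), Nat.choose_succ_succ' N]
    push_cast
    ring

lemma rothe_one (m n : ℕ) :
    rothe m 1 n = 1 / ((m : ℚ) * n + 1) * ((m + 1) * n).choose n := by
  rcases n with _ | j
  · simp
  set N := (m + 1) * (j + 1)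
  have key : ((N.choose (j + 1) : ℕ) : ℚ) * (j + 1) = N.choose j * (m * (j + 1) + 1) := by
    have h := Nat.choose_succ_right_eq N j
    rw [show N - j = m * (j + 1) + 1 by simp only [N]; ring_nf; omega] at h
    exact_mod_cast h
  rw [rothe_succ, show 1 + (j + 1) * (m + 1) = N + 1 by ring,
    show 1 + j * (m + 1) + m = N by ring, Nat.choose_succ_succ']
  push_cast at key ⊢
  field_simp
  linear_combination (m : ℚ) * key

noncomputable def rotheSeries (m x : ℕ) : ℚ⟦X⟧ := mk (rothe m x)

lemma rotheSeries_zero (m : ℕ) : rotheSeries m 0 = 1 := by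
  ext (_ | j) <;> simp [rotheSeries, coeff_one, rothe_zero_left_succ]

lemma rotheSeries_succ (m x : ℕ) :
    rotheSeries m (x + 1) = rotheSeries m x + X * rotheSeries m (x + m + 1) := by
  ext (_ | j) <;> simp [rotheSeries, coeff_succ_X_mul, rothe_succ_succ]

lemma rotheSeries_mul (m x y : ℕ) :
    rotheSeries m x * rotheSeries m y = rotheSeries m (x + y) := by
  ext n
  induction n using Nat.strong_induction_on generalizing x y with
  | _ n ih =>
  induction x generalizing y with
  | zero => simp [rotheSeries_zero]
  | succ x ihx =>
    rw [rotheSeries_succ, add_mul, map_add, ihx, show x + 1 + y = x + y + 1 by ring,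
      rotheSeries_succ m (x + y), map_add, mul_assoc]
    congr 1
    cases n with
    | zero => simp
    | succ n =>
      rw [coeff_succ_X_mul, coeff_succ_X_mul, ih n n.lt_succ_self,
        show x + m + 1 + y = x + y + m + 1 by ring]

lemma rotheSeries_one_pow (m x : ℕ) : rotheSeries m 1 ^ x = rotheSeries m x := by
  induction x with
  | zero => rw [pow_zero, rotheSeries_zero]
  | succ x ih => rw [pow_succ, ih, rotheSeries_mul]

end FussCatalan

open FussCatalan in
theorem fussCatalan_functional_equation_general (m : ℕ)
    (Y : PowerSeries ℚ)
    (hY : Y = PowerSeries.mk fun n =>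
      (1 / ((m : ℚ) * n + 1)) * (Nat.choose ((m + 1) * n) n : ℚ)) :
    Y = 1 + PowerSeries.X * Y ^ (m + 1) := by
  have hY_rothe : Y = rotheSeries m 1 := by
    rw [hY, rotheSeries]
    exact congrArg mk (funext fun n => (rothe_one m n).symm)
  rw [hY_rothe, rotheSeries_one_pow]
  simpa only [zero_add, rotheSeries_zero] using rotheSeries_succ m 0

/-- **Fuss–Catalan functional equation.** For `m ≥ 1`, the series
`Y = ∑_{n≥0} (1/(mn+1))·C((m+1)n, n)·Xⁿ` satisfies `Y = 1 + X·Y^{m+1}` in `ℚ⟦X⟧`. -/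
theorem fussCatalan_functional_equation (m : ℕ) (hm : 1 ≤ m)
    (Y : PowerSeries ℚ)
    (hY : Y = PowerSeries.mk fun n =>
      (1 / ((m : ℚ) * n + 1)) * (Nat.choose ((m + 1) * n) n : ℚ)) :
    Y = 1 + PowerSeries.X * Y ^ (m + 1) :=
  fussCatalan_functional_equation_general m Y hY
end

section
/- Fix an integer m ≥ 1 and let Y ∈ ℚ⟦X⟧ be the Fuss–Catalan generating series Y := ∑_{n≥0} (1/(mn+1))·C((m+1)n, n)·Xⁿ. Then the logarithmic derivative of Y satisfies X·Y′ = Y · ∑_{n≥1} C((m+1)n − 1, n − 1)·Xⁿ in ℚ⟦X⟧; equivalently X·Y′/Y = ∑_{n≥1} C((m+1)n − 1, n − 1)·Xⁿ. -/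
/-!
Write `A_a = ∑ₖ a/(a+(m+1)k) · C(a+(m+1)k, k) Xᵏ` and `B_c = ∑ₙ C(c+(m+1)n, n) Xⁿ`. By Pascal's
rule both families satisfy `F_{a+1} = F_a + X F_{a+1+m}`, and `A_0 = 1`; an induction on the
coefficient index, and inside it on `a`, gives Rothe's convolution `A_a B_c = B_{a+c}`.
Now `Y = A_1`, `Y′ = B_{m+1}` and the right-hand series is `X B_m`, so `X Y′ = X A_1 B_m = Y · X B_m`.
-/

open PowerSeries

/-- `rotheCoeff m a k = a / (a + (m+1)k) · C(a + (m+1)k, k)`, written without division. -/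
def rotheCoeff (m a : ℕ) : ℕ → ℚ
  | 0 => 1
  | k + 1 => (Nat.choose (a + (m + 1) * (k + 1)) (k + 1) : ℚ) -
      ((m : ℚ) + 1) * (Nat.choose (a + m + (m + 1) * k) k : ℚ)

noncomputable def rotheSeries (m a : ℕ) : ℚ⟦X⟧ := mk (rotheCoeff m a)

noncomputable def chooseSeries (m c : ℕ) : ℚ⟦X⟧ :=
  mk fun n => (Nat.choose (c + (m + 1) * n) n : ℚ)

lemma rotheCoeff_zero_succ (m k : ℕ) : rotheCoeff m 0 (k + 1) = 0 := by
  have key : (((m + 1) * (k + 1)).choose (k + 1) : ℚ) * (k + 1) =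
      (m + 1) * (m + (m + 1) * k).choose k * (k + 1) := by
    have h := Nat.add_one_mul_choose_eq (m + (m + 1) * k) k
    rw [show m + (m + 1) * k + 1 = (m + 1) * (k + 1) by ring] at h
    have hQ := congrArg (Nat.cast (R := ℚ)) h
    push_cast at hQ
    linear_combination -hQ
  simp only [rotheCoeff, zero_add, sub_eq_zero]
  exact mul_right_cancel₀ (by positivity) key

lemma rotheCoeff_succ_succ (m a k : ℕ) :
    rotheCoeff m (a + 1) (k + 1) = rotheCoeff m a (k + 1) + rotheCoeff m (a + 1 + m) k := by
  rcases k with _ | k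
  · simp [rotheCoeff]
  · set Q := a + m + (m + 1) * (k + 1)
    simp only [rotheCoeff]
    rw [show a + 1 + (m + 1) * (k + 1 + 1) = Q + 1 + 1 by ring,
      show a + (m + 1) * (k + 1 + 1) = Q + 1 by ring,
      show a + 1 + m + (m + 1) * (k + 1) = Q + 1 by ring,
      show a + 1 + m + m + (m + 1) * k = Q by ring,
      Nat.choose_succ_succ' (Q + 1) (k + 1), Nat.choose_succ_succ' Q k]
    push_cast
    ring

lemma cast_choose_succ_right_eq (m k : ℕ) :
    (((m + 1) * (k + 1)).choose (k + 1) : ℚ) * (k + 1) =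
      ((m + 1) * (k + 1)).choose k * (m * (k + 1) + 1) := by
  have h := Nat.choose_succ_right_eq ((m + 1) * (k + 1)) k
  rw [show (m + 1) * (k + 1) - k = m * (k + 1) + 1 by
    rw [Nat.sub_eq_iff_eq_add (by nlinarith)]; ring] at h
  exact_mod_cast h

lemma rotheCoeff_one (m n : ℕ) :
    rotheCoeff m 1 n = 1 / ((m : ℚ) * n + 1) * (Nat.choose ((m + 1) * n) n : ℚ) := by
  rcases n with _ | k
  · simp [rotheCoeff]
  · have key := cast_choose_succ_right_eq m k
    simp only [rotheCoeff]
    rw [show 1 + (m + 1) * (k + 1) = (m + 1) * (k + 1) + 1 by ring,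
      show 1 + m + (m + 1) * k = (m + 1) * (k + 1) by ring, Nat.choose_succ_succ']
    push_cast
    field_simp
    linear_combination (m : ℚ) * key

lemma rotheSeries_zero (m : ℕ) : rotheSeries m 0 = 1 := by
  ext (_ | k)
  · simp [rotheSeries, rotheCoeff]
  · simp [rotheSeries, rotheCoeff_zero_succ]

lemma rotheSeries_succ (m a : ℕ) :
    rotheSeries m (a + 1) = rotheSeries m a + X * rotheSeries m (a + 1 + m) := by
  ext (_ | k)
  · simp [rotheSeries, rotheCoeff]
  · simp [rotheSeries, rotheCoeff_succ_succ]

lemma chooseSeries_succ (m c : ℕ) :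
    chooseSeries m (c + 1) = chooseSeries m c + X * chooseSeries m (c + 1 + m) := by
  ext (_ | k)
  · simp [chooseSeries]
  · simp only [chooseSeries, map_add, coeff_mk, coeff_succ_X_mul]
    rw [show c + 1 + (m + 1) * (k + 1) = c + (m + 1) * (k + 1) + 1 by ring,
      show c + 1 + m + (m + 1) * k = c + (m + 1) * (k + 1) by ring, Nat.choose_succ_succ']
    push_cast
    ring

theorem rotheSeries_mul_chooseSeries (m a c : ℕ) :
    rotheSeries m a * chooseSeries m c = chooseSeries m (a + c) := by
  ext n
  induction n generalizing a with
  | zero => simp [rotheSeries, chooseSeries, rotheCoeff]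
  | succ n ih =>
    induction a with
    | zero => rw [rotheSeries_zero, one_mul, zero_add]
    | succ a iha =>
      rw [rotheSeries_succ, add_mul, map_add, iha, mul_assoc, coeff_succ_X_mul, ih,
        show a + 1 + c = a + c + 1 by ring, chooseSeries_succ, map_add, coeff_succ_X_mul,
        show a + 1 + m + c = a + c + 1 + m by ring]

lemma derivative_rotheSeries_one (m : ℕ) :
    derivative ℚ (rotheSeries m 1) = chooseSeries m (m + 1) := by
  ext n
  have key := cast_choose_succ_right_eq m n
  rw [coeff_derivative, rotheSeries, chooseSeries, coeff_mk, coeff_mk, rotheCoeff_one,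
    show m + 1 + (m + 1) * n = (m + 1) * (n + 1) by ring]
  push_cast
  field_simp
  linear_combination key

theorem fussCatalan_log_derivative_general (m : ℕ)
    (Y : PowerSeries ℚ)
    (hY : Y = PowerSeries.mk fun n =>
      (1 / ((m : ℚ) * n + 1)) * (Nat.choose ((m + 1) * n) n : ℚ)) :
    PowerSeries.X * PowerSeries.derivative ℚ Y =
      Y * PowerSeries.mk (fun n => if n = 0 then 0 else
        (Nat.choose ((m + 1) * n - 1) (n - 1) : ℚ)) := by
  have hY_rothe : Y = rotheSeries m 1 := by
    rw [hY, rotheSeries]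
    exact congrArg mk (funext fun n => (rotheCoeff_one m n).symm)
  have hZ : (mk fun n => if n = 0 then 0 else
      (Nat.choose ((m + 1) * n - 1) (n - 1) : ℚ)) = X * chooseSeries m m := by
    ext (_ | n)
    · simp
    · rw [coeff_succ_X_mul, chooseSeries, coeff_mk, coeff_mk, if_neg n.succ_ne_zero,
        Nat.add_sub_cancel, show (m + 1) * (n + 1) - 1 = m + (m + 1) * n by
          rw [Nat.sub_eq_iff_eq_add (by nlinarith)]; ring]
  rw [hY_rothe, hZ, derivative_rotheSeries_one, mul_left_comm, rotheSeries_mul_chooseSeries,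
    add_comm]

/-- **Logarithmic derivative of the Fuss–Catalan series.** For `m ≥ 1`, the series
`Y = ∑_{n≥0} (1/(mn+1))·C((m+1)n, n)·Xⁿ` satisfies
`X·Y′ = Y · ∑_{n≥1} C((m+1)n − 1, n − 1)·Xⁿ` in `ℚ⟦X⟧`. -/
theorem fussCatalan_log_derivative (m : ℕ) (hm : 1 ≤ m)
    (Y : PowerSeries ℚ)
    (hY : Y = PowerSeries.mk fun n =>
      (1 / ((m : ℚ) * n + 1)) * (Nat.choose ((m + 1) * n) n : ℚ)) :
    PowerSeries.X * PowerSeries.derivative ℚ Y =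
      Y * PowerSeries.mk (fun n => if n = 0 then 0 else
        (Nat.choose ((m + 1) * n - 1) (n - 1) : ℚ)) :=
  fussCatalan_log_derivative_general m Y hY
end

section
/- Let Y ∈ ℚ⟦X⟧ be the formal power series Y := (1/3)·(1 − ∑_{n≥0} (2/(3n−1))·C(3n, n)·Xⁿ) (so the n = 0 term is −2 and Y has constant coefficient 1). Then Y satisfies the cubic equation X − Y² + Y³ = 0 in ℚ⟦X⟧. -/
/-!
Hensel's lemma in the `X`-adically complete ring `ℚ⟦X⟧` gives a root `Z` of `X - Z² + Z³` with
constant term `1`. Implicit differentiation shows that `Z` solves the second-order linear ODE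
`(27X² - 4X) Z'' + (27X - 2) Z' - 3Z = -1`. The coefficients `2/(3n-1) · C(3n, n)` satisfy the
first-order recurrence that this ODE imposes on coefficients, so `Y` solves it too; since the
recurrence determines a solution from its constant term, `Y = Z`.
-/

open PowerSeries

namespace FigureEight

section CommRing

variable {R : Type*} [CommRing R]

noncomputable def bottomOperator (W : R⟦X⟧) : R⟦X⟧ :=
  (27 * X ^ 2 - 4 * X) * d⁄dX R (d⁄dX R W) + (27 * X - 2) * d⁄dX R W - 3 * W

theorem coeff_bottomOperator (W : R⟦X⟧) (m : ℕ) :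
    coeff m (bottomOperator W) =
      (27 * m ^ 2 - 3) * coeff m W - 2 * (m + 1) * (2 * m + 1) * coeff (m + 1) W := by
  have hW : bottomOperator W =
      X * (X * (C 27 * d⁄dX R (d⁄dX R W))) - X * (C 4 * d⁄dX R (d⁄dX R W))
        + X * (C 27 * d⁄dX R W) - C 2 * d⁄dX R W - C 3 * W := by
    simp only [bottomOperator, map_ofNat]
    ring
  rw [hW]
  rcases m with _ | _ | m <;>
    simp only [map_sub, map_add, coeff_succ_X_mul, coeff_zero_X_mul, coeff_C_mul,
      coeff_derivative] <;> push_cast <;> ring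

theorem exists_cubic_root : ∃ Z : R⟦X⟧, X - Z ^ 2 + Z ^ 3 = 0 ∧ constantCoeff Z = 1 := by
  set f : Polynomial R⟦X⟧ := Polynomial.X ^ 3 - Polynomial.X ^ 2 + Polynomial.C X with hf_def
  have hf : f.Monic := by
    rw [hf_def]
    monicity!
  have hf_eval : f.eval 1 ∈ Ideal.span {(X : R⟦X⟧)} := by simp [f]
  have hf_deriv : IsUnit (Ideal.Quotient.mk (Ideal.span {(X : R⟦X⟧)})
      ((Polynomial.derivative f).eval 1)) := by
    have : (Polynomial.derivative f).eval 1 = 1 := by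
      simp [f]
      norm_num
    simp [this]
  obtain ⟨Z, hZ, hZ1⟩ := HenselianRing.is_henselian f hf 1 hf_eval hf_deriv
  refine ⟨Z, ?_, ?_⟩
  · simp only [f, Polynomial.IsRoot, Polynomial.eval_add, Polynomial.eval_sub,
      Polynomial.eval_pow, Polynomial.eval_X, Polynomial.eval_C] at hZ
    linear_combination hZ
  · rwa [Ideal.mem_span_singleton, X_dvd_iff, map_sub, map_one, sub_eq_zero] at hZ1

theorem derivative_ofNat (n : ℕ) [n.AtLeastTwo] : d⁄dX R (ofNat(n) : R⟦X⟧) = 0 :=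
  (d⁄dX R).map_natCast n

theorem bottomOperator_of_cubic {Z : R⟦X⟧} (hZ : X - Z ^ 2 + Z ^ 3 = 0) :
    bottomOperator Z = -1 := by
  set Z' := d⁄dX R Z
  have hU : (2 * Z - 3 * Z ^ 2) * Z' = 1 := by
    have h := congrArg (d⁄dX R) hZ
    simp only [map_add, map_sub, derivative_X, Derivation.leibniz_pow, map_zero, smul_eq_mul,
      nsmul_eq_mul] at h
    push_cast at h
    linear_combination -h
  -- `2Z - 3Z²` is a unit by `hU`; dividing by it expresses `Z'` polynomially in `X` and `Z`.
  have h1 : (27 * X ^ 2 - 4 * X) * Z' = -3 * X + (9 * X - 2) * Z + 2 * Z ^ 2 := by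
    linear_combination (-3 * X + (9 * X - 2) * Z + 2 * Z ^ 2) * hU + (6 * Z - 4 + 27 * X) * Z' * hZ
  have h2 : 2 * Z * Z' = 9 * X * Z' - 3 * Z + 1 := by
    linear_combination
      Z' * ((2 * Z - 9 * X) * hU - 9 * hZ) - (2 * Z * Z' - 9 * X * Z' + 3 * Z - 1) * hU
  have h1' := congrArg (d⁄dX R) h1
  simp only [Derivation.leibniz, Derivation.leibniz_pow, map_add, map_sub, derivative_X,
    derivative_ofNat, map_neg, smul_eq_mul, nsmul_eq_mul] at h1'
  push_cast at h1'
  unfold bottomOperator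
  linear_combination h1' + 2 * h2

end CommRing

theorem eq_of_bottomOperator_eq {R : Type*} [CommRing R] [IsDomain R] [CharZero R]
    {Y Z : R⟦X⟧} (h : bottomOperator Y = bottomOperator Z)
    (h0 : constantCoeff Y = constantCoeff Z) : Y = Z := by
  ext m
  induction m with
  | zero => simpa using h0
  | succ m ih =>
    have hm := congrArg (coeff m) h
    rw [coeff_bottomOperator, coeff_bottomOperator, ih] at hm
    have hne : ((2 * (m + 1) * (2 * m + 1) : ℕ) : R) ≠ 0 := Nat.cast_ne_zero.mpr (by positivity)
    push_cast at hne
    exact mul_left_cancel₀ hne (by linear_combination -hm)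

theorem two_mul_succ_mul_choose_three_mul_succ (m : ℕ) :
    2 * (m + 1) * (2 * m + 1) * (3 * m + 3).choose (m + 1) =
      3 * (3 * m + 1) * (3 * m + 2) * (3 * m).choose m := by
  have h1 := Nat.add_one_mul_choose_eq (3 * m + 2) m
  have h2 := Nat.choose_mul_succ_eq (3 * m + 1) m
  have h3 := Nat.choose_mul_succ_eq (3 * m) m
  rw [show 3 * m + 1 + 1 - m = 2 * m + 2 by omega] at h2
  rw [show 3 * m + 1 - m = 2 * m + 1 by omega] at h3
  zify at h1 h2 h3 ⊢
  linear_combination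
    -2 * (2 * (m : ℤ) + 1) * h1 - 3 * (2 * (m : ℤ) + 1) * h2 - 3 * (3 * (m : ℤ) + 2) * h3

noncomputable def bottomCoeff (n : ℕ) : ℚ := 2 / (3 * (n : ℚ) - 1) * (Nat.choose (3 * n) n : ℚ)

noncomputable def bottomSeries : ℚ⟦X⟧ := C (1 / 3 : ℚ) * (1 - mk bottomCoeff)

theorem bottomCoeff_succ (m : ℕ) :
    2 * (m + 1) * (2 * m + 1) * bottomCoeff (m + 1) = (27 * m ^ 2 - 3) * bottomCoeff m := by
  have h : (2 * (m + 1) * (2 * m + 1) * (3 * (m + 1)).choose (m + 1) : ℚ) =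
      3 * (3 * m + 1) * (3 * m + 2) * (3 * m).choose m := by
    exact_mod_cast two_mul_succ_mul_choose_three_mul_succ m
  have hm : (3 * (m : ℚ) - 1) ≠ 0 := by
    intro h0
    have : (3 * m : ℚ) = 1 := by linarith
    norm_cast at this
    omega
  have hm' : (3 * (m : ℚ) + 2) ≠ 0 := by positivity
  unfold bottomCoeff
  push_cast
  rw [show 3 * ((m : ℚ) + 1) - 1 = 3 * m + 2 by ring,
    show (27 * m ^ 2 - 3) * (2 / (3 * (m : ℚ) - 1) * (3 * m).choose m) =
      6 * (3 * m + 1) * (3 * m).choose m * ((3 * m - 1) / (3 * m - 1)) by ring,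
    div_self hm, mul_one]
  field_simp
  linear_combination 2 * h

theorem bottomOperator_bottomSeries : bottomOperator bottomSeries = -1 := by
  ext m
  rw [coeff_bottomOperator]
  simp only [bottomSeries, coeff_C_mul, map_sub, coeff_one, coeff_mk, map_neg]
  rcases m with _ | m
  · norm_num [bottomCoeff]
  · simp only [Nat.add_one_ne_zero, if_false]
    linear_combination (1 / 3 : ℚ) * bottomCoeff_succ (m + 1)

theorem constantCoeff_bottomSeries : constantCoeff bottomSeries = 1 := by
  norm_num [bottomSeries, bottomCoeff]

end FigureEight

/-- The series `Y = (1/3)·(1 − ∑_{n≥0} (2/(3n−1))·C(3n, n)·Xⁿ)` (with constant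
coefficient `1`) satisfies the cubic equation `X − Y² + Y³ = 0` in `ℚ⟦X⟧`
(the bottom extremal A-polynomial of the figure-eight knot). -/
theorem figure_eight_bottom_curve_solution (Y : PowerSeries ℚ)
    (hY : Y = PowerSeries.C (1 / 3 : ℚ) *
      (1 - PowerSeries.mk fun n =>
        (2 / (3 * (n : ℚ) - 1)) * (Nat.choose (3 * n) n : ℚ))) :
    PowerSeries.X - Y ^ 2 + Y ^ 3 = 0 := by
  obtain ⟨Z, hZ, hZ0⟩ := FigureEight.exists_cubic_root (R := ℚ)
  have hYZ : Y = Z := by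
    change Y = FigureEight.bottomSeries at hY
    subst hY
    refine FigureEight.eq_of_bottomOperator_eq ?_ ?_
    · rw [FigureEight.bottomOperator_bottomSeries, FigureEight.bottomOperator_of_cubic hZ]
    · rw [FigureEight.constantCoeff_bottomSeries, hZ0]
  rw [hYZ, hZ]
end

section
/- Let Y ∈ ℚ⟦X⟧ be the formal power series Y := (1/3)·(1 − ∑_{n≥0} (2/(3n−1))·C(3n, n)·Xⁿ), which has constant coefficient 1 and satisfies X − Y² + Y³ = 0. Then X·Y′ = −Y · ∑_{n≥1} C(3n − 1, n − 1)·Xⁿ in ℚ⟦X⟧; equivalently X·Y′/Y = −∑_{n≥1} C(3n − 1, n − 1)·Xⁿ. -/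
open PowerSeries

/-!
Differentiating `X = Y² - Y³` gives `X·Y′·(2Y - 3Y²) = Y² - Y³`. Independently, the identity
`C(3n, n) = 3·C(3n - 1, n - 1)` and `(1 - 3n)·2/(3n - 1) = -2` turn the closed form of `Y` into
`2·S = Y - 1 - 3·X·Y′` with `S = ∑_{n≥1} C(3n - 1, n - 1)·Xⁿ`. Eliminating `Y³` between the two
leaves `2Y·(X·Y′ + Y·S) = 0`, and `Y ≠ 0` since `X ≠ 0`.
-/

theorem Nat.mul_choose_mul_add_one_sub_one (a k : ℕ) :
    a * (a * (k + 1) - 1).choose k = (a * (k + 1)).choose (k + 1) := by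
  rcases a with _ | b
  · simp
  · have hm : (b + 1) * (k + 1) - 1 + 1 = (b + 1) * (k + 1) := by
      have : 0 < (b + 1) * (k + 1) := by positivity
      omega
    have h := Nat.add_one_mul_choose_eq ((b + 1) * (k + 1) - 1) k
    rw [hm] at h
    apply Nat.eq_of_mul_eq_mul_right k.succ_pos
    linarith

namespace PowerSeries

theorem X_mul_derivative_mk {R : Type*} [CommSemiring R] (f : ℕ → R) :
    X * d⁄dX R (mk f) = mk fun n => n * f n := by
  ext (_ | n)
  · simp
  · simp [coeff_succ_X_mul, coeff_derivative, mul_comm]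

theorem X_mul_derivative_mul_of_X_sub_sq_add_pow_three_eq_zero {R : Type*} [CommRing R]
    {f : R⟦X⟧} (hf : X - f ^ 2 + f ^ 3 = 0) :
    X * d⁄dX R f * (2 * f - 3 * f ^ 2) = f ^ 2 - f ^ 3 := by
  have hd : d⁄dX R (X - f ^ 2 + f ^ 3) = 0 := by rw [hf, map_zero]
  simp only [map_add, map_sub, derivative_X, derivative_pow] at hd
  push_cast at hd
  linear_combination (-X) * hd + hf

theorem mk_choose_mul_eq_one_add {R : Type*} [CommSemiring R] (a : ℕ) :
    mk (fun n => ((a * n).choose n : R)) =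
      1 + (a : R⟦X⟧) * mk fun n => if n = 0 then 0 else ((a * n - 1).choose (n - 1) : R) := by
  ext (_ | n)
  · simp
  · rw [map_add, ← map_natCast (C (R := R)), coeff_C_mul]
    simp only [coeff_mk, coeff_one, Nat.add_one_ne_zero, if_false, zero_add,
      Nat.add_sub_cancel]
    rw [← Nat.cast_mul, Nat.mul_choose_mul_add_one_sub_one]

theorem mk_two_div_sub_three_mul_X_mul_derivative {K : Type*} [Field K] [CharZero K]
    (c : ℕ → K) :
    (mk fun n => 2 / (3 * (n : K) - 1) * c n) -
        3 * (X * d⁄dX K (mk fun n => 2 / (3 * (n : K) - 1) * c n)) = -2 * mk c := by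
  rw [X_mul_derivative_mk]
  ext n
  have hn : 3 * (n : K) - 1 ≠ 0 := by
    rw [sub_ne_zero]; exact_mod_cast (by omega : 3 * n ≠ 1)
  rw [← map_ofNat C 3, ← map_ofNat C 2, ← map_neg]
  simp only [map_sub, coeff_C_mul, coeff_mk]
  field_simp
  ring

end PowerSeries

theorem figure_eight_bottom_log_derivative_general (Y : PowerSeries ℚ)
    (hY : Y = PowerSeries.C (R := ℚ) (1 / 3) *
      (1 - PowerSeries.mk fun n =>
        (2 / (3 * (n : ℚ) - 1)) * (Nat.choose (3 * n) n : ℚ)))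
    (hcubic : PowerSeries.X - Y ^ 2 + Y ^ 3 = 0) :
    PowerSeries.X * PowerSeries.derivative ℚ Y =
      -(Y * PowerSeries.mk (fun n => if n = 0 then 0 else
        (Nat.choose (3 * n - 1) (n - 1) : ℚ))) := by
  set T : ℚ⟦X⟧ := mk fun n => 2 / (3 * (n : ℚ) - 1) * (Nat.choose (3 * n) n : ℚ)
  set S : ℚ⟦X⟧ := mk fun n => if n = 0 then 0 else ((3 * n - 1).choose (n - 1) : ℚ)
  have hthird : C (1 / 3 : ℚ) * 3 = 1 := by
    rw [← map_ofNat C 3, ← map_mul]; norm_num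
  have hXY' : X * d⁄dX ℚ Y = -C (1 / 3 : ℚ) * (X * d⁄dX ℚ T) := by
    rw [hY, Derivation.leibniz, derivative_C, map_sub, derivative_one]
    simp only [smul_eq_mul]
    ring
  have hS : Y - 1 - 3 * (X * d⁄dX ℚ Y) = 2 * S := by
    have hT := mk_two_div_sub_three_mul_X_mul_derivative fun n => ((3 * n).choose n : ℚ)
    have hM := mk_choose_mul_eq_one_add (R := ℚ) 3
    push_cast at hM
    rw [hXY', hY]
    linear_combination (-C (1 / 3 : ℚ)) * hT + 2 * C (1 / 3 : ℚ) * hM + (1 + 2 * S) * hthird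
  have hY0 : (2 : ℚ⟦X⟧) * Y ≠ 0 := by
    refine mul_ne_zero (by rw [← map_ofNat C 2]; simp) fun h => ?_
    simp [h] at hcubic
  apply mul_left_cancel₀ hY0
  linear_combination -Y ^ 2 * hS + X_mul_derivative_mul_of_X_sub_sq_add_pow_three_eq_zero hcubic

/-- For `Y = (1/3)·(1 − ∑_{n≥0} (2/(3n−1))·C(3n, n)·Xⁿ)`, the solution with
constant coefficient `1` of `X − Y² + Y³ = 0`, one has
`X·Y′ = −Y · ∑_{n≥1} C(3n − 1, n − 1)·Xⁿ` in `ℚ⟦X⟧`. -/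
theorem figure_eight_bottom_log_derivative (Y : PowerSeries ℚ)
    (hY : Y = PowerSeries.C (R := ℚ) (1 / 3) *
      (1 - PowerSeries.mk fun n =>
        (2 / (3 * (n : ℚ) - 1)) * (Nat.choose (3 * n) n : ℚ)))
    (hconst : PowerSeries.constantCoeff (R := ℚ) Y = 1)
    (hcubic : PowerSeries.X - Y ^ 2 + Y ^ 3 = 0) :
    PowerSeries.X * PowerSeries.derivative ℚ Y =
      -(Y * PowerSeries.mk (fun n => if n = 0 then 0 else
        (Nat.choose (3 * n - 1) (n - 1) : ℚ))) :=
  figure_eight_bottom_log_derivative_general Y hY hcubic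
end

section
/- Fix an integer m ≥ 2 and let Y ∈ ℚ⟦X⟧ be the formal power series Y := 1 + ∑_{n≥1} (1/n)·C(mn, n−1)·(−1)ⁿ·Xⁿ, which satisfies 1 − Y − X·Y^m = 0. Then X·Y′ = Y · ∑_{n≥1} C(mn − 1, n − 1)·(−1)ⁿ·Xⁿ in ℚ⟦X⟧; equivalently X·Y′/Y = ∑_{n≥1} C(mn − 1, n − 1)·(−X)ⁿ. -/
/-!
Differentiating `1 - Y - X Y^m = 0` and eliminating `X Y^m = 1 - Y` gives
`X Y' (m (1 - Y) + Y) = Y (Y - 1)`, an identity of formal power series that no longer involves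
`Y^m`. On the other hand, `C(N - 1, k) N = C(N, k) (N - k)` with `N = m n`, `k = n - 1` says,
coefficientwise, that the claimed series `S` satisfies `m S = (m - 1) X Y' + Y - 1`.
Multiplying this by `Y` and substituting the first identity gives `m Y S = m X Y'`.
-/

open PowerSeries

theorem Nat.cast_pred_choose_mul {R : Type*} [CommRing R] (N k : ℕ) :
    ((N - 1).choose k : R) * N = N.choose k * (N - k) := by
  rcases le_or_gt k N with hk | hk
  · rcases N with _ | n
    · simp_all
    · rw [← Nat.cast_sub hk, Nat.add_sub_cancel]
      exact_mod_cast congrArg (Nat.cast : ℕ → R) (Nat.choose_mul_succ_eq n k)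
  · simp [Nat.choose_eq_zero_of_lt hk,
      Nat.choose_eq_zero_of_lt (lt_of_le_of_lt (Nat.sub_le N 1) hk)]

namespace PowerSeries

variable {R : Type*} [CommRing R]

theorem mul_derivative_pow (f : R⟦X⟧) (m : ℕ) :
    f * d⁄dX R (f ^ m) = m * f ^ m * d⁄dX R f := by
  rcases m with _ | n
  · simp
  · rw [derivative_pow, Nat.add_sub_cancel, pow_succ]
    ring

theorem X_mul_derivative_mul_of_one_sub_sub_X_mul_pow_eq_zero {Y : R⟦X⟧} {m : ℕ}
    (h : 1 - Y - X * Y ^ m = 0) :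
    X * d⁄dX R Y * ((m : R⟦X⟧) * (1 - Y) + Y) = Y * (Y - 1) := by
  have hd : -d⁄dX R Y - (X * d⁄dX R (Y ^ m) + Y ^ m) = 0 := by
    simpa only [map_sub, derivative_one, Derivation.leibniz, derivative_X, smul_eq_mul, mul_one,
      map_zero, zero_sub] using congrArg (d⁄dX R) h
  linear_combination (-X * Y) * hd - X * X * mul_derivative_pow Y m + (m * X * d⁄dX R Y + Y) * h

end PowerSeries

/-- The generating series of the Fuss–Catalan numbers `C(m n, n - 1) / n`, evaluated at `-X`. -/
noncomputable def negFussCatalanSeries (m : ℕ) : ℚ⟦X⟧ :=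
  mk fun n => if n = 0 then 1 else (1 / (n : ℚ)) * (Nat.choose (m * n) (n - 1) : ℚ) * (-1) ^ n

noncomputable def negChoosePredSeries (m : ℕ) : ℚ⟦X⟧ :=
  mk fun n => if n = 0 then 0 else (Nat.choose (m * n - 1) (n - 1) : ℚ) * (-1) ^ n

theorem natCast_mul_negChoosePredSeries (m : ℕ) :
    (m : ℚ⟦X⟧) * negChoosePredSeries m =
      ((m : ℚ⟦X⟧) - 1) * (X * d⁄dX ℚ (negFussCatalanSeries m)) + negFussCatalanSeries m - 1 := by
  ext n
  rw [← map_natCast (C (R := ℚ)), ← map_one (C (R := ℚ)), ← map_sub]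
  rcases n with _ | k
  · simp [negChoosePredSeries, negFussCatalanSeries]
  · have h := Nat.cast_pred_choose_mul (R := ℚ) (m * (k + 1)) k
    rw [map_sub (coeff _), map_add (coeff _), coeff_C_mul, coeff_C_mul, coeff_succ_X_mul,
      coeff_derivative]
    simp only [negChoosePredSeries, negFussCatalanSeries, coeff_mk, coeff_C,
      add_tsub_cancel_right, Nat.add_one_ne_zero, if_false, sub_zero]
    push_cast at h ⊢
    field_simp
    linear_combination h

/-- For `m ≥ 2` and `Y = 1 + ∑_{n≥1} (1/n)·C(mn, n−1)·(−1)ⁿ·Xⁿ`, which satisfies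
`1 − Y − X·Y^m = 0`, one has `X·Y′ = Y · ∑_{n≥1} C(mn − 1, n − 1)·(−1)ⁿ·Xⁿ` in `ℚ⟦X⟧`. -/
theorem twist_knot_top_log_derivative (m : ℕ) (hm : 2 ≤ m)
    (Y : PowerSeries ℚ)
    (hY : Y = PowerSeries.mk fun n => if n = 0 then 1 else
      (1 / (n : ℚ)) * (Nat.choose (m * n) (n - 1) : ℚ) * (-1) ^ n)
    (heq : 1 - Y - PowerSeries.X * Y ^ m = 0) :
    PowerSeries.X * PowerSeries.derivative ℚ Y =
      Y * PowerSeries.mk (fun n => if n = 0 then 0 else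
        (Nat.choose (m * n - 1) (n - 1) : ℚ) * (-1) ^ n) := by
  obtain rfl : Y = negFussCatalanSeries m := hY
  show X * d⁄dX ℚ _ = _ * negChoosePredSeries m
  have hlog := X_mul_derivative_mul_of_one_sub_sub_X_mul_pow_eq_zero heq
  have hcoef := natCast_mul_negChoosePredSeries m
  have : CharZero ℚ⟦X⟧ := charZero_of_injective_algebraMap (algebraMap ℚ ℚ⟦X⟧).injective
  apply mul_left_cancel₀ (Nat.cast_ne_zero.mpr (by omega) : (m : ℚ⟦X⟧) ≠ 0)
  linear_combination hlog - negFussCatalanSeries m * hcoef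
end

section
/- For every integer k ≥ 1 and every integer r ≥ 1, the integer r² divides the integer ∑_{d ∣ r} μ(r/d)·C((2k+1)·d − 1, d − 1). (Equivalently, the top BPS invariants b⁺_r = (1/r²)·∑_{d ∣ r} μ(r/d)·C((2k+1)d − 1, d − 1) of the twist knot K_p with p = −k ≤ −1 are integers; the case k = 1 gives the integrality of the bottom BPS invariants b⁻_r = −(1/r²)·∑_{d ∣ r} μ(r/d)·C(3d − 1, d − 1) of all twist knots K_p with p ≤ −1.) -/
/-!
For odd `a`, a prime `p` and `K = n p`, the Jacobsthal-type congruence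
`C(aK - 1, K - 1) ≡ C(an - 1, n - 1) (mod p ^ (2 v_p(K)))` holds: once the factors divisible by
`p` are cancelled, the two coefficients differ by the ratio of `∏ (aK - j)` to `∏ j` over
`0 < j < K` prime to `p`, and pairing `j` with `K - j` shows that this ratio is `1` modulo the
`p`-part of `K²`. In the Möbius sum the squarefree divisors of `r` that matter come in pairs
`t`, `p t` with `p ∤ t`, so each pair contributes a multiple of `p ^ (2 v_p(r))`.
-/

open Finset ArithmeticFunction
open scoped ArithmeticFunction.Moebius

theorem choose_pred_mul_prod_Ico (N K : ℕ) :
    (N - 1).choose (K - 1) * ∏ j ∈ Ico 1 K, j = ∏ j ∈ Ico 1 K, (N - j) := by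
  obtain _ | K := K
  · simp
  rw [prod_Ico_id_eq_factorial, Nat.add_sub_cancel, mul_comm,
    ← Nat.descFactorial_eq_factorial_mul_choose, Nat.descFactorial_eq_prod_range,
    prod_Ico_eq_prod_range, Nat.add_sub_cancel]
  exact prod_congr rfl fun i _ => by omega

theorem Ico_filter_dvd_eq_map (n : ℕ) {p : ℕ} (hp : 0 < p) :
    {j ∈ Ico 1 (n * p) | p ∣ j} = (Ico 1 n).map ⟨(p * ·), mul_right_injective₀ hp.ne'⟩ := by
  ext j
  simp only [mem_filter, mem_Ico, mem_map, Function.Embedding.coeFn_mk]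
  constructor
  · rintro ⟨⟨hj, hjn⟩, i, rfl⟩
    exact ⟨i, ⟨Nat.pos_of_mul_pos_left hj, by nlinarith⟩, rfl⟩
  · rintro ⟨i, ⟨hi, hin⟩, rfl⟩
    exact ⟨⟨Nat.mul_pos hp hi, by nlinarith⟩, dvd_mul_right p i⟩

theorem choose_mul_prod_filter_not_dvd (N n : ℕ) {p : ℕ} (hp : 0 < p) :
    (N * p - 1).choose (n * p - 1) * ∏ j ∈ Ico 1 (n * p) with ¬p ∣ j, j =
      (N - 1).choose (n - 1) * ∏ j ∈ Ico 1 (n * p) with ¬p ∣ j, (N * p - j) := by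
  have hbig := choose_pred_mul_prod_Ico (N * p) (n * p)
  have hsmall := choose_pred_mul_prod_Ico N n
  rw [← prod_filter_mul_prod_filter_not _ (p ∣ ·) (fun j => j),
    ← prod_filter_mul_prod_filter_not _ (p ∣ ·) (fun j => N * p - j),
    Ico_filter_dvd_eq_map n hp, prod_map, prod_map] at hbig
  simp only [Function.Embedding.coeFn_mk] at hbig
  have hsub : ∀ i ∈ Ico 1 n, N * p - p * i = p * (N - i) := fun i _ => by
    rw [Nat.mul_sub, mul_comm N]
  rw [prod_congr rfl hsub, prod_mul_distrib, prod_mul_distrib, prod_const, ← hsmall] at hbig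
  have hpos : 0 < p ^ #(Ico 1 n) * ∏ i ∈ Ico 1 n, i :=
    Nat.mul_pos (Nat.pow_pos hp) (prod_pos fun i hi => by simp only [mem_Ico] at hi; omega)
  apply Nat.eq_of_mul_eq_mul_left hpos
  linarith [hbig]

/-- Pairing `j` with `K - j`: `(aK - j)(aK - (K - j)) = j (K - j) + a (a - 1) K²`. The only
possible fixed point is `j = K / 2`, where `M ∣ 4` and `aK - j ≡ j` because `a` is odd. -/
theorem prod_mul_sub_eq_prod {M K a : ℕ} (ha : Odd a) (hM : M ∣ K ^ 2) {S : Finset ℕ}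
    (hS : ∀ j ∈ S, j ≤ K ∧ K - j ∈ S ∧ j.Coprime M) :
    ∏ j ∈ S, ((a * K : ℕ) - j : ZMod M) = ∏ j ∈ S, (j : ZMod M) := by
  have hK : (K : ZMod M) ^ 2 = 0 := by exact_mod_cast (ZMod.natCast_eq_zero_iff _ _).2 hM
  have hinv : ∀ j ∈ S, (j : ZMod M) * (j : ZMod M)⁻¹ = 1 := fun j hj =>
    ZMod.coe_mul_inv_eq_one j (hS j hj).2.2
  set f : ℕ → ZMod M := fun j => ((a * K : ℕ) - j) * (j : ZMod M)⁻¹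
  have hpair : ∀ j ∈ S, f j * f (K - j) = 1 := by
    intro j hj
    have h1 := hinv j hj
    have h2 := hinv _ (hS j hj).2.1
    rw [Nat.cast_sub (hS j hj).1] at h2
    simp only [f]
    push_cast [Nat.cast_sub (hS j hj).1]
    linear_combination (((a : ZMod M) ^ 2 - a) * (j : ZMod M)⁻¹ * (K - j : ZMod M)⁻¹) * hK
      + ((K - j : ZMod M) * (K - j : ZMod M)⁻¹) * h1 + h2
  have hfixed : ∀ j ∈ S, f j ≠ 1 → K - j ≠ j := by
    intro j hj hfj hfix
    apply hfj
    have hKj : K = 2 * j := by have := (hS j hj).1; omega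
    have hM4 : M ∣ 4 := by
      have hMj : M.Coprime (j ^ 2) := ((hS j hj).2.2.pow_left 2).symm
      exact hMj.dvd_of_dvd_mul_right (by rw [hKj, mul_pow] at hM; simpa using hM)
    have h4 : (4 : ZMod M) = 0 := by exact_mod_cast (ZMod.natCast_eq_zero_iff 4 M).2 hM4
    obtain ⟨m, rfl⟩ := ha
    simp only [f, hKj]
    push_cast
    linear_combination ((m : ZMod M) * j * (j : ZMod M)⁻¹) * h4 + hinv j hj
  have hprod : ∏ j ∈ S, f j = 1 :=
    prod_involution (fun j _ => K - j) hpair hfixed (fun j hj => (hS j hj).2.1)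
      (fun j hj => Nat.sub_sub_self (hS j hj).1)
  calc ∏ j ∈ S, ((a * K : ℕ) - j : ZMod M) = ∏ j ∈ S, (f j * j) :=
        prod_congr rfl fun j hj => by linear_combination (-((a * K : ℕ) - j : ZMod M)) * hinv j hj
    _ = ∏ j ∈ S, (j : ZMod M) := by rw [prod_mul_distrib, hprod, one_mul]

theorem pow_dvd_choose_sub_choose {p a : ℕ} (hp : p.Prime) (ha : Odd a) (n : ℕ) :
    (p : ℤ) ^ (2 * (n * p).factorization p) ∣
      ((a * (n * p) - 1).choose (n * p - 1) : ℤ) - ((a * n - 1).choose (n - 1) : ℤ) := by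
  set M := p ^ (2 * (n * p).factorization p)
  set T := {j ∈ Ico 1 (n * p) | ¬p ∣ j}
  have hcop : ∀ j ∈ T, j.Coprime M := fun j hj =>
    ((hp.coprime_iff_not_dvd.2 (mem_filter.1 hj).2).pow_left _).symm
  have hT : ∀ j ∈ T, j ≤ n * p ∧ n * p - j ∈ T ∧ j.Coprime M := by
    intro j hj
    obtain ⟨hjK, hpj⟩ := mem_filter.1 hj
    simp only [mem_Ico] at hjK
    refine ⟨hjK.2.le, mem_filter.2 ⟨mem_Ico.2 ⟨by omega, by omega⟩, fun hd => hpj ?_⟩, hcop j hj⟩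
    simpa [Nat.sub_sub_self hjK.2.le] using Nat.dvd_sub (dvd_mul_left p n) hd
  have hM : M ∣ (n * p) ^ 2 := by
    rw [show M = (p ^ (n * p).factorization p) ^ 2 from pow_mul' _ _ _]
    exact pow_dvd_pow_of_dvd (Nat.ordProj_dvd _ _) 2
  have hprod : ∏ j ∈ T, ((a * n * p - j : ℕ) : ZMod M) = ∏ j ∈ T, (j : ZMod M) := by
    rw [← prod_mul_sub_eq_prod ha hM hT]
    refine prod_congr rfl fun j hj => ?_
    rw [Nat.cast_sub, mul_assoc]
    have := (hT j hj).1
    nlinarith [ha.pos]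
  have hunit : IsUnit (∏ j ∈ T, (j : ZMod M)) :=
    IsUnit.prod_iff.2 fun j hj => (ZMod.unitOfCoprime j (hcop j hj)).isUnit
  have hid := congrArg (Nat.cast : ℕ → ZMod M) (choose_mul_prod_filter_not_dvd (a * n) n hp.pos)
  push_cast at hid
  change _ * ∏ j ∈ T, (j : ZMod M) = _ at hid
  rw [hprod, hunit.mul_left_inj, ZMod.natCast_eq_natCast_iff, mul_assoc] at hid
  exact_mod_cast hid.symm.dvd

theorem sum_divisors_prime_pow_mul_moebius_mul {p e c : ℕ} (hp : p.Prime) (he : e ≠ 0)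
    (hc : ¬p ∣ c) (g : ℕ → ℤ) :
    ∑ s ∈ (p ^ e * c).divisors, μ s * g s = ∑ t ∈ c.divisors, μ t * (g t - g (p * t)) := by
  have hcop : (p ^ e).Coprime c := ((hp.coprime_iff_not_dvd.2 hc).pow_left e)
  rw [Nat.divisors_mul, mul_def, sum_image hcop.mul_injOn_divisors, sum_product, sum_comm]
  refine sum_congr rfl fun t ht => ?_
  have hpt : ∀ i, (p ^ i).Coprime t := fun i =>
    (hp.coprime_iff_not_dvd.2 fun h => hc (h.trans (Nat.dvd_of_mem_divisors ht))).pow_left i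
  simp only [Nat.sum_divisors_prime_pow hp, isMultiplicative_moebius.map_mul_of_coprime (hpt _)]
  rw [sum_eq_add 0 1 zero_ne_one]
  · simp only [pow_zero, pow_one, moebius_apply_one, moebius_apply_prime hp, one_mul]
    ring
  · intro i _ hi
    simp only [moebius_apply_prime_pow hp hi.1, hi.2, if_false, zero_mul]
  · exact fun h => absurd (mem_range.2 (Nat.succ_pos e)) h
  · exact fun h => absurd (mem_range.2 (by omega)) h

section
variable {f : ℕ → ℤ} {k : ℕ}
  (hf : ∀ p n : ℕ, p.Prime → 0 < n → (p : ℤ) ^ (k * (n * p).factorization p) ∣ f (n * p) - f n)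
include hf

theorem pow_factorization_dvd_sum_moebius_mul {p : ℕ} (hp : p.Prime) (r : ℕ) :
    (p : ℤ) ^ (k * r.factorization p) ∣ ∑ d ∈ r.divisors, μ (r / d) * f d := by
  rcases eq_or_ne r 0 with rfl | hr
  · simp
  rcases eq_or_ne (r.factorization p) 0 with he | he
  · simp [he]
  have hcr : p ^ r.factorization p * (r / p ^ r.factorization p) = r :=
    Nat.ordProj_mul_ordCompl_eq_self r p
  have hsplit := sum_divisors_prime_pow_mul_moebius_mul hp he (Nat.not_dvd_ordCompl hp hr)
    (fun s => f (r / s))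
  rw [hcr] at hsplit
  rw [← Nat.sum_divisorsAntidiagonal' (fun x y => μ x * f y),
    Nat.sum_divisorsAntidiagonal (fun x y => μ x * f y), hsplit]
  refine dvd_sum fun t ht => dvd_mul_of_dvd_right ?_ _
  have hpt : ¬p ∣ t := fun h => Nat.not_dvd_ordCompl hp hr (h.trans (Nat.dvd_of_mem_divisors ht))
  obtain ⟨n, hn⟩ : p * t ∣ r := by
    rw [← hcr]
    exact mul_dvd_mul (dvd_pow_self p he) (Nat.dvd_of_mem_divisors ht)
  have ht0 : 0 < t := Nat.pos_of_mem_divisors ht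
  have hrt : r / t = n * p := by
    rw [hn, mul_comm p t, mul_assoc, Nat.mul_div_cancel_left _ ht0, mul_comm]
  have hrpt : r / (p * t) = n := by
    rw [hn, Nat.mul_div_cancel_left _ (Nat.mul_pos hp.pos ht0)]
  have hv : (n * p).factorization p = r.factorization p := by
    rw [← hrt, Nat.factorization_div ⟨p * n, by rw [hn]; ring⟩, Finsupp.tsub_apply,
      Nat.factorization_eq_zero_of_not_dvd hpt, Nat.sub_zero]
  have hn0 : 0 < n := Nat.pos_of_ne_zero (by rintro rfl; exact hr hn)
  simpa only [hrt, hrpt, hv] using hf p n hp hn0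

theorem pow_dvd_sum_moebius_mul (r : ℕ) :
    (r : ℤ) ^ k ∣ ∑ d ∈ r.divisors, μ (r / d) * f d := by
  rcases eq_or_ne r 0 with rfl | hr
  · simp
  rw [← Nat.cast_pow, Int.natCast_dvd, Nat.dvd_iff_prime_pow_dvd_dvd]
  intro p i hp hpi
  rw [hp.pow_dvd_iff_le_factorization (pow_ne_zero k hr), Nat.factorization_pow] at hpi
  refine (Nat.pow_dvd_pow p hpi).trans (Int.natCast_dvd.1 ?_)
  exact_mod_cast pow_factorization_dvd_sum_moebius_mul hf hp r
end

theorem twist_knot_neg_bps_integrality_general (k r : ℕ) :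
    ((r : ℤ) ^ 2) ∣ ∑ d ∈ r.divisors,
      ArithmeticFunction.moebius (r / d) *
        (Nat.choose ((2 * k + 1) * d - 1) (d - 1) : ℤ) :=
  pow_dvd_sum_moebius_mul (fun _ n hp _ => pow_dvd_choose_sub_choose hp (odd_two_mul_add_one k) n) r

/-- **Integrality of extremal BPS invariants of negative twist knots.**
For every `k ≥ 1` and `r ≥ 1`, `r²` divides `∑_{d ∣ r} μ(r/d)·C((2k+1)d − 1, d − 1)`. -/
theorem twist_knot_neg_bps_integrality (k r : ℕ) (hk : 1 ≤ k) (hr : 1 ≤ r) :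
    ((r : ℤ) ^ 2) ∣ ∑ d ∈ r.divisors,
      ArithmeticFunction.moebius (r / d) *
        (Nat.choose ((2 * k + 1) * d - 1) (d - 1) : ℤ) :=
  twist_knot_neg_bps_integrality_general k r
end

section
/- For every integer p ≥ 2 and every integer r ≥ 1, the integer r² divides the integer ∑_{d ∣ r} μ(r/d)·(−1)^d·C((2p+2)·d − 1, d − 1). (Equivalently, the top BPS invariants b⁺_r = (1/r²)·∑_{d ∣ r} μ(r/d)·(−1)^d·C((2p+2)d − 1, d − 1) of the twist knot K_p with p ≥ 2 are integers.) -/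
/-!
Write `a(d) = (-1)^d C(Md - 1, d - 1)` with `M = 2p + 2`. For a prime `q` with
`r = q^(k+1) m`, `q ∤ m`, only the divisors `q^(k+1) e` and `q^k e` of `r` carry a nonzero
Möbius weight at `q`, so the sum equals `∑_{e ∣ m} μ(m/e) (a(q^(k+1) e) - a(q^k e))`, and it
suffices that `q^(2k+2) ∣ a(qd) - a(d)` whenever `q^k ∣ d`.

In `C(Mqd - 1, qd - 1) = ∏_{0<j<qd} (Mqd - j)/j` the factors with `q ∣ j` reproduce
`C(Md - 1, d - 1)`, so `a(qd) ∏_{j ∈ S} j = a(d) ∏_{j ∈ S} (j - N)` with `N = Mqd` and `S`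
the `0 < j < qd` prime to `q`. Pairing `j` with `qd - j` shows that the two products agree
modulo `q^(2k+2)`: `(j - N)(qd - j - N) = j(qd - j) + N(N - qd)` and
`N(N - qd) = M(M - 1)(qd)^2`.
-/

open Finset ArithmeticFunction
open scoped ArithmeticFunction.Moebius

theorem sum_divisors_moebius_mul_prime_pow_mul {q m : ℕ} (hq : q.Prime) (hqm : q.Coprime m)
    (a : ℕ → ℤ) (k : ℕ) :
    ∑ d ∈ (q ^ (k + 1) * m).divisors, μ (q ^ (k + 1) * m / d) * a d =
      ∑ e ∈ m.divisors, μ (m / e) * (a (q ^ (k + 1) * e) - a (q ^ k * e)) := by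
  rw [Nat.divisors_mul, mul_def, sum_image (hqm.pow_left _).mul_injOn_divisors, sum_product,
    Nat.sum_divisors_prime_pow hq, sum_comm]
  refine sum_congr rfl fun e he => ?_
  have hμ : ∀ i ≤ k + 1,
      μ (q ^ (k + 1) * m / (q ^ i * e)) = μ (q ^ (k + 1 - i)) * μ (m / e) := by
    intro i hi
    rw [← Nat.div_mul_div_comm (pow_dvd_pow q hi) (Nat.dvd_of_mem_divisors he),
      Nat.pow_div hi hq.pos, isMultiplicative_moebius.map_mul_of_coprime
        ((hqm.coprime_dvd_right (Nat.div_dvd_of_dvd (Nat.dvd_of_mem_divisors he))).pow_left _)]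
  have hvanish : ∀ i ∈ range k, μ (q ^ (k + 1) * m / (q ^ i * e)) * a (q ^ i * e) = 0 := by
    intro i hi
    have hi := mem_range.mp hi
    rw [hμ i (by omega), moebius_apply_prime_pow hq (by omega), if_neg (by omega), zero_mul,
      zero_mul]
  rw [sum_range_succ, sum_range_succ, sum_eq_zero hvanish, hμ k (by omega), hμ (k + 1) le_rfl,
    show k + 1 - k = 1 by omega, Nat.sub_self, pow_one, pow_zero, moebius_apply_prime hq,
    moebius_apply_one]
  ring

theorem sq_dvd_sum_divisors_moebius_mul {a : ℕ → ℤ}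
    (ha : ∀ q k e : ℕ, q.Prime →
      (q : ℤ) ^ (2 * (k + 1)) ∣ a (q ^ (k + 1) * e) - a (q ^ k * e))
    (r : ℕ) : (r : ℤ) ^ 2 ∣ ∑ d ∈ r.divisors, μ (r / d) * a d := by
  rcases eq_or_ne r 0 with rfl | hr
  · simp
  rw [← Nat.cast_pow, Int.natCast_dvd, Nat.dvd_iff_prime_pow_dvd_dvd]
  intro q j hq hqj
  have hj : j ≤ 2 * r.factorization q := by
    simpa [Nat.factorization_pow] using
      (hq.pow_dvd_iff_le_factorization (pow_ne_zero 2 hr)).mp hqj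
  rw [← Int.natCast_dvd, Nat.cast_pow]
  have hr' := Nat.ordProj_mul_ordCompl_eq_self r q
  have hqm := Nat.coprime_ordCompl hq hr
  cases hv : r.factorization q with
  | zero => simp [show j = 0 by omega]
  | succ k =>
    rw [hv] at hr' hj hqm
    rw [← hr', sum_divisors_moebius_mul_prime_pow_mul hq hqm]
    exact dvd_sum fun e _ => ((pow_dvd_pow _ hj).trans (ha q k e hq)).mul_left _

theorem prod_natCast_sub_eq_prod_natCast {R : Type*} [CommRing R] {S : Finset ℕ} {n : ℕ}
    {N : R} (hS : ∀ j ∈ S, j ≤ n ∧ n - j ∈ S) (hunit : ∀ j ∈ S, IsUnit (j : R))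
    (hN : N * (N - n) = 0) (hfix : ∀ j ∈ S, n - j = j → N = 0) :
    ∏ j ∈ S, ((j : R) - N) = ∏ j ∈ S, (j : R) := by
  have hfactor : ∀ j ∈ S, (j : R) - N = j * (1 - N * Ring.inverse (j : R)) := fun j hj => by
    rw [mul_sub, ← mul_assoc, mul_comm (j : R) N, mul_assoc,
      Ring.mul_inverse_cancel _ (hunit j hj)]
    ring
  -- `(j - N) (n - j - N) = j (n - j) + N (N - n)`, so the factors at `j` and `n - j` cancel.
  have hpair : ∏ j ∈ S, (1 - N * Ring.inverse (j : R)) = 1 := by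
    refine prod_involution (fun j _ => n - j) (fun j hj => ?_) (fun j hj hne hfx => hne ?_)
      (fun j hj => (hS j hj).2) (fun j hj => Nat.sub_sub_self (hS j hj).1)
    · have hjn := hS j hj
      have hj := Ring.mul_inverse_cancel _ (hunit j hj)
      have hnj := Ring.mul_inverse_cancel _ (hunit _ hjn.2)
      rw [Nat.cast_sub hjn.1] at hnj ⊢
      linear_combination (Ring.inverse (j : R) * Ring.inverse ((n : R) - j)) * hN
        + N * Ring.inverse ((n : R) - j) * hj + N * Ring.inverse (j : R) * hnj
    · rw [hfix j hj hfx, zero_mul, sub_zero]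
  rw [prod_congr rfl hfactor, prod_mul_distrib, hpair, mul_one]

def nonMultiplesBelow (q n : ℕ) : Finset ℕ := {j ∈ Ico 1 n | ¬ q ∣ j}

theorem prod_Ico_mul_eq_prod_mul_prod_nonMultiplesBelow {β : Type*} [CommMonoid β]
    (f : ℕ → β) {q : ℕ} (hq : 0 < q) (d : ℕ) :
    ∏ j ∈ Ico 1 (q * d), f j =
      (∏ i ∈ Ico 1 d, f (q * i)) * ∏ j ∈ nonMultiplesBelow q (q * d), f j := by
  have hmul : {j ∈ Ico 1 (q * d) | q ∣ j} = (Ico 1 d).image (q * ·) := by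
    ext j
    simp only [mem_filter, mem_Ico, mem_image]
    constructor
    · rintro ⟨⟨h1, h2⟩, i, rfl⟩
      exact ⟨i, ⟨Nat.pos_of_mul_pos_left h1, Nat.lt_of_mul_lt_mul_left h2⟩, rfl⟩
    · rintro ⟨i, ⟨h1, h2⟩, rfl⟩
      exact ⟨⟨Nat.mul_pos hq h1, Nat.mul_lt_mul_of_pos_left h2 hq⟩, dvd_mul_right q i⟩
  rw [← prod_filter_mul_prod_filter_not (Ico 1 (q * d)) (q ∣ ·), hmul,
    prod_image fun i _ i' _ h => Nat.eq_of_mul_eq_mul_left hq h, nonMultiplesBelow]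

theorem prod_nonMultiplesBelow_sub_eq_prod {q M d k : ℕ} (hq : q.Prime) (hM : Even M)
    (hd : q ^ k ∣ d) :
    ∏ j ∈ nonMultiplesBelow q (q * d), ((j : ZMod (q ^ (2 * (k + 1)))) - M * (q * d : ℕ)) =
      ∏ j ∈ nonMultiplesBelow q (q * d), (j : ZMod (q ^ (2 * (k + 1)))) := by
  have hqn : q ^ (k + 1) ∣ q * d := by rw [pow_succ']; exact mul_dvd_mul_left q hd
  refine prod_natCast_sub_eq_prod_natCast (n := q * d) (fun j hj => ?_) (fun j hj => ?_) ?_ ?_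
  · simp only [nonMultiplesBelow, mem_filter, mem_Ico] at hj ⊢
    refine ⟨by omega, by omega, fun h => hj.2 ?_⟩
    simpa [Nat.sub_sub_self hj.1.2.le] using Nat.dvd_sub (dvd_mul_right q d) h
  · simp only [nonMultiplesBelow, mem_filter] at hj
    exact (ZMod.isUnit_natCast_iff_not_dvd_pow hq (by omega)).mpr hj.2
  · have : ((q * d) ^ 2 : ℕ) = (0 : ZMod (q ^ (2 * (k + 1)))) := by
      rw [ZMod.natCast_eq_zero_iff, pow_mul']
      exact pow_dvd_pow_of_dvd hqn 2
    push_cast at this ⊢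
    linear_combination (M : ZMod (q ^ (2 * (k + 1)))) * (M - 1) * this
  -- A fixed point `2 j = q d` with `q ∤ j` forces `q = 2` and `k = 0`; then `4 ∣ M q d`.
  · intro j hj hfix
    simp only [nonMultiplesBelow, mem_filter, mem_Ico] at hj
    obtain rfl : q = 2 := (Nat.prime_dvd_prime_iff_eq hq Nat.prime_two).mp <|
      (hq.dvd_mul.mp (show q ∣ 2 * j from ⟨d, by omega⟩)).resolve_right hj.2
    obtain rfl : d = j := by omega
    obtain rfl : k = 0 := by
      by_contra hk
      exact hj.2 ((dvd_pow_self 2 hk).trans hd)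
    obtain ⟨t, rfl⟩ := hM
    rw [← Nat.cast_mul, ZMod.natCast_eq_zero_iff]
    exact ⟨t * d, by ring⟩

theorem choose_mul_prod_Ico_eq_prod_sub {N n : ℕ} (hn : n ≤ N) :
    ((N - 1).choose (n - 1) : ℤ) * ∏ j ∈ Ico 1 n, (j : ℤ) =
      ∏ j ∈ Ico 1 n, ((N : ℤ) - j) := by
  rcases Nat.eq_zero_or_pos n with rfl | hn0
  · simp
  have hdesc : (N - 1).descFactorial (n - 1) = ∏ j ∈ Ico 1 n, (N - j) := by
    rw [Nat.descFactorial_eq_prod_range, prod_Ico_eq_prod_range]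
    exact prod_congr rfl fun i _ => by omega
  have hfact : ∏ j ∈ Ico 1 n, (j : ℤ) = ((n - 1).factorial : ℤ) := by
    rw [← prod_Ico_id_eq_factorial, Nat.sub_add_cancel hn0, Nat.cast_prod]
  rw [hfact, mul_comm, ← Nat.cast_mul, ← Nat.descFactorial_eq_factorial_mul_choose, hdesc,
    Nat.cast_prod]
  exact prod_congr rfl fun j hj => Nat.cast_sub ((mem_Ico.mp hj).2.le.trans hn)

def signedChoose (M d : ℕ) : ℤ := (-1) ^ d * ((M * d - 1).choose (d - 1) : ℤ)

theorem signedChoose_mul_prod_Ico {M n : ℕ} (hM : 0 < M) (hn : 0 < n) :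
    signedChoose M n * ∏ j ∈ Ico 1 n, (j : ℤ) = -∏ j ∈ Ico 1 n, ((j : ℤ) - M * n) := by
  have hneg : ∏ j ∈ Ico 1 n, ((M * n : ℕ) - (j : ℤ)) =
      (-1) ^ (n - 1) * ∏ j ∈ Ico 1 n, ((j : ℤ) - M * n) := by
    rw [← Nat.card_Ico 1 n, ← prod_neg]
    push_cast
    exact prod_congr rfl fun j _ => by ring
  rw [signedChoose, mul_assoc, choose_mul_prod_Ico_eq_prod_sub (Nat.le_mul_of_pos_left n hM),
    hneg, ← mul_assoc, ← pow_add]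
  obtain ⟨m, rfl⟩ := Nat.exists_eq_add_of_lt hn
  simp

theorem signedChoose_mul_prod_nonMultiplesBelow {M q d : ℕ} (hM : 0 < M) (hq : 0 < q)
    (hd : 0 < d) :
    signedChoose M (q * d) * ∏ j ∈ nonMultiplesBelow q (q * d), (j : ℤ) =
      signedChoose M d * ∏ j ∈ nonMultiplesBelow q (q * d), ((j : ℤ) - M * (q * d : ℕ)) := by
  have hc : (q : ℤ) ^ (d - 1) * ∏ i ∈ Ico 1 d, (i : ℤ) ≠ 0 := by
    refine mul_ne_zero (pow_ne_zero _ (Nat.cast_ne_zero.mpr hq.ne')) ?_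
    refine prod_ne_zero_iff.mpr fun i hi => ?_
    exact Nat.cast_ne_zero.mpr (Nat.one_le_iff_ne_zero.mp (mem_Ico.mp hi).1)
  refine mul_left_cancel₀ hc ?_
  have hsplit := fun f : ℕ → ℤ => prod_Ico_mul_eq_prod_mul_prod_nonMultiplesBelow f hq d
  calc ((q : ℤ) ^ (d - 1) * ∏ i ∈ Ico 1 d, (i : ℤ)) *
        (signedChoose M (q * d) * ∏ j ∈ nonMultiplesBelow q (q * d), (j : ℤ))
      = signedChoose M (q * d) * ∏ j ∈ Ico 1 (q * d), (j : ℤ) := by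
        rw [hsplit]
        simp only [Nat.cast_mul, prod_mul_distrib, prod_const, Nat.card_Ico]
        ring
    _ = -∏ j ∈ Ico 1 (q * d), ((j : ℤ) - M * (q * d : ℕ)) :=
        signedChoose_mul_prod_Ico hM (Nat.mul_pos hq hd)
    _ = -((q : ℤ) ^ (d - 1) * ∏ i ∈ Ico 1 d, ((i : ℤ) - M * d)) *
          ∏ j ∈ nonMultiplesBelow q (q * d), ((j : ℤ) - M * (q * d : ℕ)) := by
        rw [hsplit, ← Nat.card_Ico 1 d, ← prod_const, ← prod_mul_distrib, neg_mul]
        congr 2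
        exact prod_congr rfl fun i _ => by push_cast; ring
    _ = _ := by
        rw [← mul_neg, ← signedChoose_mul_prod_Ico hM hd]
        ring

theorem signedChoose_prime_mul_sub_dvd {M q d k : ℕ} (hM : Even M) (hM0 : 0 < M)
    (hq : q.Prime) (hd : q ^ k ∣ d) :
    (q : ℤ) ^ (2 * (k + 1)) ∣ signedChoose M (q * d) - signedChoose M d := by
  rcases Nat.eq_zero_or_pos d with rfl | hd0
  · simp
  have hcong : (q : ℤ) ^ (2 * (k + 1)) ∣
      ∏ j ∈ nonMultiplesBelow q (q * d), ((j : ℤ) - M * (q * d : ℕ)) -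
        ∏ j ∈ nonMultiplesBelow q (q * d), (j : ℤ) := by
    rw [← Nat.cast_pow, ← ZMod.intCast_eq_intCast_iff_dvd_sub]
    push_cast
    exact_mod_cast (prod_nonMultiplesBelow_sub_eq_prod hq hM hd).symm
  have hcop :
      IsCoprime ((q : ℤ) ^ (2 * (k + 1))) (∏ j ∈ nonMultiplesBelow q (q * d), (j : ℤ)) := by
    refine (IsCoprime.prod_right fun j hj => ?_).pow_left
    simp only [nonMultiplesBelow, mem_filter] at hj
    exact Nat.isCoprime_iff_coprime.mpr (hq.coprime_iff_not_dvd.mpr hj.2)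
  refine hcop.dvd_of_dvd_mul_right ?_
  rw [sub_mul, signedChoose_mul_prod_nonMultiplesBelow hM0 hq.pos hd0, ← mul_sub]
  exact hcong.mul_left _

theorem twist_knot_pos_top_bps_integrality_general (p r : ℕ) :
    ((r : ℤ) ^ 2) ∣ ∑ d ∈ r.divisors,
      ArithmeticFunction.moebius (r / d) * (-1) ^ d *
        (Nat.choose ((2 * p + 2) * d - 1) (d - 1) : ℤ) := by
  have hM : Even (2 * p + 2) := ⟨p + 1, by ring⟩
  have hcong : ∀ q k e : ℕ, q.Prime → (q : ℤ) ^ (2 * (k + 1)) ∣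
      signedChoose (2 * p + 2) (q ^ (k + 1) * e) - signedChoose (2 * p + 2) (q ^ k * e) :=
    fun q k e hq => by
      rw [pow_succ', mul_assoc]
      exact signedChoose_prime_mul_sub_dvd hM (by omega) hq (dvd_mul_right _ _)
  simpa only [signedChoose, mul_assoc] using sq_dvd_sum_divisors_moebius_mul hcong r

/-- **Integrality of top BPS invariants of positive twist knots.**
For every `p ≥ 2` and `r ≥ 1`, `r²` divides `∑_{d ∣ r} μ(r/d)·(−1)^d·C((2p+2)d − 1, d − 1)`. -/
theorem twist_knot_pos_top_bps_integrality (p r : ℕ) (hp : 2 ≤ p) (hr : 1 ≤ r) :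
    ((r : ℤ) ^ 2) ∣ ∑ d ∈ r.divisors,
      ArithmeticFunction.moebius (r / d) * (-1) ^ d *
        (Nat.choose ((2 * p + 2) * d - 1) (d - 1) : ℤ) :=
  twist_knot_pos_top_bps_integrality_general p r
end

section
/- Define b : ℕ → ℝ by b(r) := −(1/r²)·∑_{d ∣ r} μ(r/d)·C(3d − 1, d − 1) for r ≥ 1. Then the ratio b(r)/b(r+1) tends to 4/27 as r → ∞. (This is the exponential growth rate of the bottom BPS invariants of the figure-eight knot 4₁, matching the zero x₀ = 4/27 of the Y-discriminant −x(27x − 4) of its bottom extremal A-polynomial x − Y² + Y³.) -/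
open Filter Nat Topology

namespace FigEightAux


/-- The unsigned summand. -/
def a (r : ℕ) : ℕ := Nat.choose (3 * r - 1) (r - 1)

lemma a_pos (r : ℕ) : 0 < a r := Nat.choose_pos (by omega)

lemma key (m : ℕ) :
    a (m + 2) * ((m + 1) * (2 * m + 3) * (2 * m + 4)) =
      a (m + 1) * ((3 * m + 3) * (3 * m + 4) * (3 * m + 5)) := by
  have hA : a (m + 2) = Nat.choose (3 * m + 5) (m + 1) := by
    unfold a; congr 1 <;> omega
  have hB : a (m + 1) = Nat.choose (3 * m + 2) m := by
    unfold a; congr 1 <;> omega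
  have h1 : Nat.choose (3 * m + 5) (m + 1) * (m + 1)! * (2 * m + 4)! = (3 * m + 5)! := by
    have := Nat.choose_mul_factorial_mul_factorial (show m + 1 ≤ 3 * m + 5 by omega)
    simpa [show 3 * m + 5 - (m + 1) = 2 * m + 4 by omega] using this
  have h2 : Nat.choose (3 * m + 2) m * m ! * (2 * m + 2)! = (3 * m + 2)! := by
    have := Nat.choose_mul_factorial_mul_factorial (show m ≤ 3 * m + 2 by omega)
    simpa [show 3 * m + 2 - m = 2 * m + 2 by omega] using this
  have e1 : (3 * m + 5)! = (3 * m + 5) * ((3 * m + 4) * ((3 * m + 3) * (3 * m + 2)!)) := by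
    rw [show 3 * m + 5 = (3 * m + 4) + 1 by omega, Nat.factorial_succ,
      show 3 * m + 4 = (3 * m + 3) + 1 by omega, Nat.factorial_succ,
      show 3 * m + 3 = (3 * m + 2) + 1 by omega, Nat.factorial_succ]
  have e2 : (2 * m + 4)! = (2 * m + 4) * ((2 * m + 3) * (2 * m + 2)!) := by
    rw [show 2 * m + 4 = (2 * m + 3) + 1 by omega, Nat.factorial_succ,
      show 2 * m + 3 = (2 * m + 2) + 1 by omega, Nat.factorial_succ]
  have e3 : (m + 1)! = (m + 1) * m ! := Nat.factorial_succ m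
  rw [hA, hB]
  apply Nat.eq_of_mul_eq_mul_right (Nat.mul_pos (Nat.factorial_pos m) (Nat.factorial_pos (2 * m + 2)))
  calc Nat.choose (3 * m + 5) (m + 1) * ((m + 1) * (2 * m + 3) * (2 * m + 4)) * (m ! * (2 * m + 2)!)
      = Nat.choose (3 * m + 5) (m + 1) * (m + 1)! * (2 * m + 4)! := by rw [e2, e3]; ring
    _ = (3 * m + 5)! := h1
    _ = (3 * m + 5) * ((3 * m + 4) * ((3 * m + 3) * (Nat.choose (3 * m + 2) m * m ! * (2 * m + 2)!))) := by
        rw [e1, h2]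
    _ = Nat.choose (3 * m + 2) m * ((3 * m + 3) * (3 * m + 4) * (3 * m + 5)) * (m ! * (2 * m + 2)!) := by
        ring

lemma four_mul_le (r : ℕ) (hr : 1 ≤ r) : 4 * a r ≤ a (r + 1) := by
  obtain ⟨m, rfl⟩ : ∃ m, r = m + 1 := ⟨r - 1, by omega⟩
  have hk := key m
  have hineq : 4 * ((m + 1) * (2 * m + 3) * (2 * m + 4)) ≤ (3 * m + 3) * (3 * m + 4) * (3 * m + 5) := by
    nlinarith [sq_nonneg m, Nat.zero_le m]
  have hpos : 0 < (m + 1) * (2 * m + 3) * (2 * m + 4) := by positivity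
  apply Nat.le_of_mul_le_mul_right _ hpos
  calc 4 * a (m + 1) * ((m + 1) * (2 * m + 3) * (2 * m + 4))
      = a (m + 1) * (4 * ((m + 1) * (2 * m + 3) * (2 * m + 4))) := by ring
    _ ≤ a (m + 1) * ((3 * m + 3) * (3 * m + 4) * (3 * m + 5)) := Nat.mul_le_mul_left _ hineq
    _ = a (m + 2) * ((m + 1) * (2 * m + 3) * (2 * m + 4)) := hk.symm

lemma a_pow_le (d k : ℕ) (hd : 1 ≤ d) : a d * 4 ^ k ≤ a (d + k) := by
  induction k with
  | zero => simp
  | succ k ih =>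
      calc a d * 4 ^ (k + 1) = a d * 4 ^ k * 4 := by ring
        _ ≤ a (d + k) * 4 := Nat.mul_le_mul_right 4 ih
        _ ≤ a (d + k + 1) := by
            have := four_mul_le (d + k) (by omega)
            omega

lemma a_mono {d e : ℕ} (hd : 1 ≤ d) (hde : d ≤ e) : a d ≤ a e := by
  have h := a_pow_le d (e - d) hd
  have : a d * 1 ≤ a d * 4 ^ (e - d) := Nat.mul_le_mul_left _ (Nat.one_le_pow _ _ (by norm_num))
  calc a d = a d * 1 := by ring
    _ ≤ a d * 4 ^ (e - d) := this
    _ ≤ a (d + (e - d)) := h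
    _ = a e := by congr 1; omega

lemma a_half_le (r : ℕ) (hr : 2 ≤ r) : a (r / 2) * 2 ^ r ≤ a r := by
  have h := a_pow_le (r / 2) (r - r / 2) (by omega)
  have h2 : 2 ^ r ≤ 4 ^ (r - r / 2) := by
    calc 2 ^ r ≤ 2 ^ (2 * (r - r / 2)) := Nat.pow_le_pow_right (by norm_num) (by omega)
      _ = 4 ^ (r - r / 2) := by rw [pow_mul]; norm_num
  calc a (r / 2) * 2 ^ r ≤ a (r / 2) * 4 ^ (r - r / 2) := Nat.mul_le_mul_left _ h2
    _ ≤ a (r / 2 + (r - r / 2)) := h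
    _ = a r := by congr 1; omega

noncomputable def S (r : ℕ) : ℝ :=
  ∑ d ∈ r.divisors, ((ArithmeticFunction.moebius (r / d) : ℤ) : ℝ) * (a d : ℝ)

lemma proper_div_le_half {r d : ℕ} (hr : 1 ≤ r) (hd : d ∈ r.divisors.erase r) : d ≤ r / 2 := by
  rw [Finset.mem_erase, Nat.mem_divisors] at hd
  obtain ⟨hne, ⟨c, hc⟩, -⟩ := hd
  have hc2 : 2 ≤ c := by
    rcases Nat.lt_or_ge c 2 with h | h
    · interval_cases c <;> omega
    · exact h
  have : d * 2 ≤ r := by calc d * 2 ≤ d * c := Nat.mul_le_mul_left _ hc2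
                            _ = r := hc.symm
  omega

lemma S_sub (r : ℕ) (hr : 2 ≤ r) : |S r - (a r : ℝ)| ≤ (r : ℝ) * (a (r / 2) : ℝ) := by
  have hmem : r ∈ r.divisors := Nat.mem_divisors_self r (by omega)
  have hsplit : ∑ d ∈ r.divisors.erase r,
      ((ArithmeticFunction.moebius (r / d) : ℤ) : ℝ) * (a d : ℝ) +
      ((ArithmeticFunction.moebius (r / r) : ℤ) : ℝ) * (a r : ℝ) = S r :=
    Finset.sum_erase_add _ _ hmem
  have hrr : ((ArithmeticFunction.moebius (r / r) : ℤ) : ℝ) = 1 := by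
    rw [Nat.div_self (by omega : 0 < r)]
    simp
  have hE : S r - (a r : ℝ) = ∑ d ∈ r.divisors.erase r,
      ((ArithmeticFunction.moebius (r / d) : ℤ) : ℝ) * (a d : ℝ) := by
    rw [← hsplit, hrr]; ring
  rw [hE]
  calc |∑ d ∈ r.divisors.erase r, ((ArithmeticFunction.moebius (r / d) : ℤ) : ℝ) * (a d : ℝ)|
      ≤ ∑ d ∈ r.divisors.erase r, |((ArithmeticFunction.moebius (r / d) : ℤ) : ℝ) * (a d : ℝ)| :=
        Finset.abs_sum_le_sum_abs _ _
    _ ≤ ∑ _d ∈ r.divisors.erase r, (a (r / 2) : ℝ) := by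
        apply Finset.sum_le_sum
        intro d hd
        have hd1 : 1 ≤ d := Nat.pos_of_mem_divisors (Finset.mem_of_mem_erase hd)
        have hle : d ≤ r / 2 := proper_div_le_half (by omega) hd
        have hmu : |((ArithmeticFunction.moebius (r / d) : ℤ) : ℝ)| ≤ 1 := by
          rw [← Int.cast_abs]
          exact_mod_cast ArithmeticFunction.abs_moebius_le_one
        calc |((ArithmeticFunction.moebius (r / d) : ℤ) : ℝ) * (a d : ℝ)|
            = |((ArithmeticFunction.moebius (r / d) : ℤ) : ℝ)| * (a d : ℝ) := by
              rw [abs_mul, Nat.abs_cast]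
          _ ≤ 1 * (a d : ℝ) := by
              apply mul_le_mul_of_nonneg_right hmu (by positivity)
          _ = (a d : ℝ) := one_mul _
          _ ≤ (a (r / 2) : ℝ) := by exact_mod_cast a_mono hd1 hle
    _ = (r.divisors.erase r).card * (a (r / 2) : ℝ) := by
        rw [Finset.sum_const, nsmul_eq_mul]
    _ ≤ (r : ℝ) * (a (r / 2) : ℝ) := by
        apply mul_le_mul_of_nonneg_right _ (by positivity)
        have hsub : r.divisors.erase r ⊆ Finset.Icc 1 r := by
          intro d hd
          have hmem' := Finset.mem_of_mem_erase hd
          rw [Nat.mem_divisors] at hmem'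
          rw [Finset.mem_Icc]
          exact ⟨Nat.pos_of_mem_divisors (Finset.mem_of_mem_erase hd),
            Nat.divisor_le (Finset.mem_of_mem_erase hd)⟩
        calc ((r.divisors.erase r).card : ℝ) ≤ ((Finset.Icc 1 r).card : ℝ) := by
              exact_mod_cast Finset.card_le_card hsub
          _ = (r : ℝ) := by rw [Nat.card_Icc]; simp

noncomputable def g (r : ℕ) : ℝ := S r / (a r : ℝ)

lemma g_tendsto : Tendsto g atTop (𝓝 1) := by
  have hbound : Tendsto (fun r : ℕ => (r : ℝ) * (1 / 2 : ℝ) ^ r) atTop (𝓝 0) :=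
    tendsto_self_mul_const_pow_of_lt_one (by norm_num) (by norm_num)
  have hzero : Tendsto (fun r => g r - 1) atTop (𝓝 0) := by
    apply squeeze_zero_norm' _ hbound
    filter_upwards [eventually_ge_atTop 2] with r hr
    have hapos : (0 : ℝ) < (a r : ℝ) := by exact_mod_cast a_pos r
    have h1 : (a (r / 2) : ℝ) * 2 ^ r ≤ (a r : ℝ) := by exact_mod_cast a_half_le r hr
    have h2 : (a (r / 2) : ℝ) ≤ (1 / 2 : ℝ) ^ r * (a r : ℝ) := by
      rw [div_pow, one_pow, div_mul_eq_mul_div, le_div_iff₀ (by positivity)]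
      linarith
    have hS := S_sub r hr
    have heq : ‖g r - 1‖ = |S r - (a r : ℝ)| / (a r : ℝ) := by
      rw [Real.norm_eq_abs, g, ← abs_of_pos hapos, ← abs_div]
      congr 1
      field_simp
      rw [abs_of_pos hapos]; ring
    rw [heq]
    rw [div_le_iff₀ hapos]
    calc |S r - (a r : ℝ)| ≤ (r : ℝ) * (a (r / 2) : ℝ) := hS
      _ ≤ (r : ℝ) * ((1 / 2 : ℝ) ^ r * (a r : ℝ)) := by
          apply mul_le_mul_of_nonneg_left h2 (by positivity)
      _ = (r : ℝ) * (1 / 2 : ℝ) ^ r * (a r : ℝ) := by ring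
  have := hzero.add_const 1
  simpa using this

lemma ratio_eq (r : ℕ) (hr : 1 ≤ r) :
    (a r : ℝ) / (a (r + 1) : ℝ) =
      ((r : ℝ) * (2 * r + 1) * (2 * r + 2)) / ((3 * r) * (3 * r + 1) * (3 * r + 2)) := by
  obtain ⟨m, rfl⟩ : ∃ m, r = m + 1 := ⟨r - 1, by omega⟩
  have hk := key m
  have hkR : (a (m + 2) : ℝ) * ((m + 1) * (2 * m + 3) * (2 * m + 4)) =
      (a (m + 1) : ℝ) * ((3 * m + 3) * (3 * m + 4) * (3 * m + 5)) := by exact_mod_cast hk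
  have h1 : (0 : ℝ) < (a (m + 2) : ℝ) := by exact_mod_cast a_pos (m + 2)
  have h2 : (0 : ℝ) < (a (m + 1) : ℝ) := by exact_mod_cast a_pos (m + 1)
  push_cast
  rw [div_eq_div_iff (by positivity) (by positivity)]
  nlinarith [hkR]

lemma ratio_tendsto : Tendsto (fun r : ℕ => (a r : ℝ) / (a (r + 1) : ℝ)) atTop (𝓝 (4 / 27)) := by
  have hinv : Tendsto (fun r : ℕ => 1 / (r : ℝ)) atTop (𝓝 0) :=
    tendsto_one_div_atTop_nhds_zero_nat
  have hnum : Tendsto (fun r : ℕ => (1 : ℝ) * (2 + 1 / r) * (2 + 2 * (1 / r))) atTop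
      (𝓝 ((1 : ℝ) * (2 + 0) * (2 + 2 * 0))) :=
    ((tendsto_const_nhds.mul (tendsto_const_nhds.add hinv))).mul
      (tendsto_const_nhds.add (hinv.const_mul 2))
  have hden : Tendsto (fun r : ℕ => (3 : ℝ) * (3 + 1 / r) * (3 + 2 * (1 / r))) atTop
      (𝓝 ((3 : ℝ) * (3 + 0) * (3 + 2 * 0))) :=
    ((tendsto_const_nhds.mul (tendsto_const_nhds.add hinv))).mul
      (tendsto_const_nhds.add (hinv.const_mul 2))
  have hq : Tendsto (fun r : ℕ =>
      ((1 : ℝ) * (2 + 1 / r) * (2 + 2 * (1 / r))) / ((3 : ℝ) * (3 + 1 / r) * (3 + 2 * (1 / r))))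
      atTop (𝓝 (4 / 27)) := by
    have := hnum.div hden (by norm_num)
    convert this using 2
    norm_num
    norm_num
  apply hq.congr'
  filter_upwards [eventually_ge_atTop 1] with r hr
  rw [ratio_eq r hr]
  have hr0 : (r : ℝ) ≠ 0 := by positivity
  field_simp


end FigEightAux

open FigEightAux in
/-- **Growth rate of the bottom BPS invariants of the figure-eight knot.**
For `b r = −(1/r²)·∑_{d ∣ r} μ(r/d)·C(3d − 1, d − 1)`, the ratio `b r / b (r+1)`
tends to `4/27` as `r → ∞`. -/
theorem figure_eight_bps_growth_rate (b : ℕ → ℝ)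
    (hb : ∀ r : ℕ, 1 ≤ r → b r = -(1 / (r : ℝ) ^ 2) *
      ∑ d ∈ r.divisors, (ArithmeticFunction.moebius (r / d) : ℝ) *
        (Nat.choose (3 * d - 1) (d - 1) : ℝ)) :
    Filter.Tendsto (fun r : ℕ => b r / b (r + 1)) Filter.atTop (nhds (4 / 27)) := by
  have hbS : ∀ r : ℕ, 1 ≤ r → b r = -(1 / (r : ℝ) ^ 2) * S r := by
    intro r hr
    rw [hb r hr]; rfl
  have hg' : Tendsto (fun r => g (r + 1)) atTop (𝓝 1) :=
    g_tendsto.comp (tendsto_add_atTop_nat 1)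
  have hsq : Tendsto (fun r : ℕ => (((r : ℝ) + 1) / r) ^ 2) atTop (𝓝 1) := by
    have h1 : Tendsto (fun r : ℕ => (1 : ℝ) + 1 / r) atTop (𝓝 (1 + 0)) :=
      tendsto_const_nhds.add tendsto_one_div_atTop_nhds_zero_nat
    have h2 := (h1.pow 2)
    have : ((1 : ℝ) + 0) ^ 2 = 1 := by norm_num
    rw [this] at h2
    apply h2.congr'
    filter_upwards [eventually_ge_atTop 1] with r hr
    have hr0 : (r : ℝ) ≠ 0 := by
      simp only [ne_eq, Nat.cast_eq_zero]; omega
    field_simp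
  have hF : Tendsto (fun r : ℕ =>
      ((a r : ℝ) / (a (r + 1) : ℝ)) * (g r / g (r + 1)) * (((r : ℝ) + 1) / r) ^ 2) atTop
      (𝓝 (4 / 27 * (1 / 1) * 1)) :=
    (ratio_tendsto.mul (g_tendsto.div hg' one_ne_zero)).mul hsq
  have hval : (4 / 27 * (1 / 1) * 1 : ℝ) = 4 / 27 := by norm_num
  rw [hval] at hF
  apply hF.congr'
  filter_upwards [eventually_ge_atTop 1,
    g_tendsto.eventually (eventually_gt_nhds (by norm_num : (1/2 : ℝ) < 1)),
    hg'.eventually (eventually_gt_nhds (by norm_num : (1/2 : ℝ) < 1))] with r hr hgr hgr1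
  have hr0 : (r : ℝ) ≠ 0 := by
    simp only [ne_eq, Nat.cast_eq_zero]; omega
  have hr10 : ((r : ℝ) + 1) ≠ 0 := by positivity
  have har : ((a r : ℝ)) ≠ 0 := by
    have := a_pos r; positivity
  have har1 : ((a (r + 1) : ℝ)) ≠ 0 := by
    have := a_pos (r + 1); positivity
  have hgr0 : g r ≠ 0 := by exact ne_of_gt (by linarith)
  have hgr10 : g (r + 1) ≠ 0 := by exact ne_of_gt (by linarith)
  have hSr : S r = g r * (a r : ℝ) := by rw [g, div_mul_cancel₀ _ har]
  have hSr1 : S (r + 1) = g (r + 1) * (a (r + 1) : ℝ) := by rw [g, div_mul_cancel₀ _ har1]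
  rw [hbS r hr, hbS (r + 1) (by omega), hSr, hSr1]
  push_cast
  field_simp
end

section
/- Define b : ℕ → ℝ by b(r) := (1/r²)·∑_{d ∣ r} μ(r/d)·(−1)^{d+1}·C(2d − 1, d − 1) for r ≥ 1. Then the ratio b(r)/b(r+1) tends to −1/4 as r → ∞. (This is the exponential growth rate of the bottom BPS invariants of the knot 5₂, matching the zero x₀ = −1/4 of the Y-discriminant 1 + 4x of its bottom extremal A-polynomial 1 − Y − x·Y².) -/
open Filter ArithmeticFunction Finset

private lemma nat_choose_le_two_pow {n k : ℕ} (h : k ≤ n) : n.choose k ≤ 2 ^ n := by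
  rw [← Nat.sum_range_choose n]
  exact Finset.single_le_sum (f := fun i => n.choose i) (fun _ _ => Nat.zero_le _)
    (Finset.mem_range.mpr (Nat.lt_succ_of_le h))

private lemma two_choose_eq (n : ℕ) (h : 1 ≤ n) :
    2 * Nat.choose (2 * n - 1) (n - 1) = Nat.centralBinom n := by
  obtain ⟨m, rfl⟩ := Nat.exists_eq_add_of_le h
  have h1 : 2 * (1 + m) - 1 = 2 * m + 1 := by omega
  have h2 : 1 + m - 1 = m := by omega
  rw [h1, h2, Nat.centralBinom]
  have h3 : 2 * (1 + m) = (2 * m + 1) + 1 := by omega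
  rw [h3]
  have h4 : (1 + m) = m + 1 := by omega
  rw [h4, Nat.choose_succ_succ (2 * m + 1) m]
  have h5 : (2 * m + 1).choose (m + 1) = (2 * m + 1).choose m := by
    have := Nat.choose_symm (n := 2 * m + 1) (k := m + 1) (by omega)
    simpa [show 2 * m + 1 - (m + 1) = m by omega] using this.symm
  simp only [Nat.succ_eq_add_one]
  omega

noncomputable def Fsum (r : ℕ) : ℝ :=
  ∑ d ∈ r.divisors, (ArithmeticFunction.moebius (r / d) : ℝ) * (-1) ^ (d + 1) *
    (Nat.choose (2 * d - 1) (d - 1) : ℝ)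

noncomputable def Smain (r : ℕ) : ℝ := (-1) ^ (r + 1) * (Nat.choose (2 * r - 1) (r - 1) : ℝ)

private lemma C_pos (r : ℕ) : (0 : ℝ) < (Nat.choose (2 * r - 1) (r - 1) : ℝ) := by
  exact_mod_cast Nat.choose_pos (by omega)

private lemma S_ne (r : ℕ) : Smain r ≠ 0 := by
  have := C_pos r
  have h2 : ((-1 : ℝ)) ^ (r + 1) ≠ 0 := by positivity
  unfold Smain
  positivity

/-- the error term equality -/
private lemma F_eq (r : ℕ) (hr : 1 ≤ r) :
    Fsum r = Smain r + ∑ d ∈ r.divisors.erase r,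
      (ArithmeticFunction.moebius (r / d) : ℝ) * (-1) ^ (d + 1) *
        (Nat.choose (2 * d - 1) (d - 1) : ℝ) := by
  have hmem : r ∈ r.divisors := Nat.mem_divisors_self r (by omega)
  rw [Fsum, ← Finset.add_sum_erase _ _ hmem]
  congr 1
  rw [Nat.div_self (by omega), ArithmeticFunction.moebius_apply_one]
  simp [Smain]

private lemma E_bound (r : ℕ) (hr : 1 ≤ r) :
    |∑ d ∈ r.divisors.erase r,
      (ArithmeticFunction.moebius (r / d) : ℝ) * (-1) ^ (d + 1) *
        (Nat.choose (2 * d - 1) (d - 1) : ℝ)| ≤ (r : ℝ) * 2 ^ r := by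
  calc |∑ d ∈ r.divisors.erase r, (ArithmeticFunction.moebius (r / d) : ℝ) * (-1) ^ (d + 1) *
        (Nat.choose (2 * d - 1) (d - 1) : ℝ)|
      ≤ ∑ d ∈ r.divisors.erase r, |(ArithmeticFunction.moebius (r / d) : ℝ) * (-1) ^ (d + 1) *
        (Nat.choose (2 * d - 1) (d - 1) : ℝ)| := Finset.abs_sum_le_sum_abs _ _
    _ ≤ ∑ _d ∈ r.divisors.erase r, (2 : ℝ) ^ r := by
        apply Finset.sum_le_sum
        intro d hd
        have hd' := Finset.mem_of_mem_erase hd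
        have hdr : d ∣ r := (Nat.mem_divisors.mp hd').1
        have hdne : d ≠ r := Finset.ne_of_mem_erase hd
        have hdpos : 1 ≤ d := Nat.pos_of_mem_divisors hd'
        -- proper divisor : 2 * d ≤ r
        have h2d : 2 * d ≤ r := by
          obtain ⟨k, rfl⟩ := hdr
          have hk : 2 ≤ k := by
            rcases Nat.lt_or_ge k 2 with h | h
            · interval_cases k <;> omega
            · exact h
          nlinarith
        have hch : Nat.choose (2 * d - 1) (d - 1) ≤ 2 ^ r := by
          calc Nat.choose (2 * d - 1) (d - 1) ≤ 2 ^ (2 * d - 1) :=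
              nat_choose_le_two_pow (by omega)
            _ ≤ 2 ^ r := Nat.pow_le_pow_right (by omega) (by omega)
        have hmu : |(ArithmeticFunction.moebius (r / d) : ℝ)| ≤ 1 := by
          have := ArithmeticFunction.abs_moebius_le_one (n := r / d)
          exact_mod_cast this
        rw [abs_mul, abs_mul]
        have h1 : |((-1 : ℝ)) ^ (d + 1)| = 1 := by
          rw [abs_pow, abs_neg, abs_one, one_pow]
        rw [h1, mul_one]
        have h2 : |(Nat.choose (2 * d - 1) (d - 1) : ℝ)| ≤ (2 : ℝ) ^ r := by
          rw [abs_of_nonneg (by positivity)]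
          exact_mod_cast hch
        calc |(ArithmeticFunction.moebius (r / d) : ℝ)| * |(Nat.choose (2 * d - 1) (d - 1) : ℝ)|
            ≤ 1 * (2 : ℝ) ^ r := by
              apply mul_le_mul hmu h2 (abs_nonneg _) zero_le_one
          _ = (2 : ℝ) ^ r := one_mul _
    _ = ((r.divisors.erase r).card : ℝ) * 2 ^ r := by rw [Finset.sum_const, nsmul_eq_mul]
    _ ≤ (r : ℝ) * 2 ^ r := by
        gcongr
        have hsub : r.divisors.erase r ⊆ Finset.Icc 1 r := by
          intro d hd
          have hd' := Finset.mem_of_mem_erase hd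
          exact Finset.mem_Icc.mpr ⟨Nat.pos_of_mem_divisors hd',
            Nat.le_of_dvd (by omega) (Nat.mem_divisors.mp hd').1⟩
        have := Finset.card_le_card hsub
        rw [Nat.card_Icc] at this
        exact_mod_cast this.trans (by omega)

private lemma C_lower (r : ℕ) (hr : 4 ≤ r) :
    (4 : ℝ) ^ r / (2 * r) ≤ (Nat.choose (2 * r - 1) (r - 1) : ℝ) := by
  have h1 := Nat.four_pow_lt_mul_centralBinom r hr
  have h2 := two_choose_eq r (by omega)
  rw [← h2] at h1
  have h3 : (4 : ℝ) ^ r ≤ (2 * r : ℝ) * (Nat.choose (2 * r - 1) (r - 1) : ℝ) := by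
    have : (4 : ℕ) ^ r ≤ 2 * r * Nat.choose (2 * r - 1) (r - 1) := by
      rw [show r * (2 * Nat.choose (2 * r - 1) (r - 1)) =
        2 * r * Nat.choose (2 * r - 1) (r - 1) from by ring] at h1
      omega
    exact_mod_cast this
  rw [div_le_iff₀ (by positivity)]
  linarith

noncomputable def uu (r : ℕ) : ℝ := Fsum r / Smain r

private lemma F_eq_mul (r : ℕ) : Fsum r = uu r * Smain r := by
  rw [uu, div_mul_cancel₀ _ (S_ne r)]

private lemma uu_tendsto : Filter.Tendsto uu Filter.atTop (nhds 1) := by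
  have key : ∀ᶠ r : ℕ in Filter.atTop, ‖uu r - 1‖ ≤ 2 * (r : ℝ) ^ 2 * (1 / 2) ^ r := by
    filter_upwards [Filter.eventually_ge_atTop 4] with r hr4
    have hr1 : 1 ≤ r := by omega
    have hS : |Smain r| = (Nat.choose (2 * r - 1) (r - 1) : ℝ) := by
      rw [Smain, abs_mul, abs_pow, abs_neg, abs_one, one_pow, one_mul,
        abs_of_nonneg (le_of_lt (C_pos r))]
    have h1 : uu r - 1 = (Fsum r - Smain r) / Smain r := by
      rw [uu, div_sub_one (S_ne r)]
    rw [Real.norm_eq_abs, h1, abs_div, hS]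
    have hE := E_bound r hr1
    have hE' : |Fsum r - Smain r| ≤ (r : ℝ) * 2 ^ r := by
      rw [F_eq r hr1]; simpa using hE
    calc |Fsum r - Smain r| / (Nat.choose (2 * r - 1) (r - 1) : ℝ)
        ≤ ((r : ℝ) * 2 ^ r) / ((4 : ℝ) ^ r / (2 * r)) := by
          apply div_le_div₀ (by positivity) hE' (by positivity) (C_lower r hr4)
      _ = 2 * (r : ℝ) ^ 2 * (1 / 2) ^ r := by
          have hr0 : (r : ℝ) ≠ 0 := by positivity
          have h4 : (4 : ℝ) ^ r = 2 ^ r * 2 ^ r := by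
            rw [show (4 : ℝ) = 2 * 2 by norm_num, mul_pow]
          rw [div_div_eq_mul_div, h4, div_pow, one_pow]
          field_simp
  have h0 : Filter.Tendsto (fun r : ℕ => 2 * (r : ℝ) ^ 2 * (1 / 2) ^ r)
      Filter.atTop (nhds 0) := by
    have := tendsto_pow_const_mul_const_pow_of_lt_one 2
      (r := (1 / 2 : ℝ)) (by norm_num) (by norm_num)
    have h2 := this.const_mul (2 : ℝ)
    simpa [mul_assoc] using h2
  have hsub : Filter.Tendsto (fun r : ℕ => uu r - 1) Filter.atTop (nhds 0) :=
    squeeze_zero_norm' key h0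
  have := hsub.add (tendsto_const_nhds (x := (1 : ℝ)))
  simpa using this

private lemma C_rel (r : ℕ) (hr : 1 ≤ r) :
    ((r : ℝ) + 1) * (Nat.choose (2 * (r + 1) - 1) ((r + 1) - 1) : ℝ) =
      2 * (2 * (r : ℝ) + 1) * (Nat.choose (2 * r - 1) (r - 1) : ℝ) := by
  have h1 : ((r : ℝ) + 1) * (Nat.centralBinom (r + 1) : ℝ) =
      2 * (2 * (r : ℝ) + 1) * (Nat.centralBinom r : ℝ) := by
    exact_mod_cast Nat.succ_mul_centralBinom_succ r
  have h2 : (Nat.centralBinom r : ℝ) = 2 * (Nat.choose (2 * r - 1) (r - 1) : ℝ) := by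
    exact_mod_cast (two_choose_eq r hr).symm
  have h3 : (Nat.centralBinom (r + 1) : ℝ) =
      2 * (Nat.choose (2 * (r + 1) - 1) ((r + 1) - 1) : ℝ) := by
    exact_mod_cast (two_choose_eq (r + 1) (by omega)).symm
  rw [h2, h3] at h1
  linear_combination h1 / 2

private lemma S_ratio (r : ℕ) (hr : 1 ≤ r) :
    Smain r / Smain (r + 1) = -(((r : ℝ) + 1) / (2 * (2 * (r : ℝ) + 1))) := by
  have hc := C_pos r
  have hc' := C_pos (r + 1)
  have hrel := C_rel r hr
  have hne : ((-1 : ℝ)) ^ (r + 1) ≠ 0 := by positivity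
  have hcc : (Nat.choose (2 * r - 1) (r - 1) : ℝ) /
      (Nat.choose (2 * (r + 1) - 1) ((r + 1) - 1) : ℝ) =
      ((r : ℝ) + 1) / (2 * (2 * (r : ℝ) + 1)) := by
    rw [div_eq_div_iff hc'.ne' (by positivity)]
    linear_combination (-1 : ℝ) * hrel
  rw [Smain, Smain,
    show ((-1 : ℝ)) ^ (r + 1 + 1) = ((-1 : ℝ)) ^ (r + 1) * (-1) from pow_succ _ _, mul_assoc, mul_div_mul_left _ _ hne, neg_one_mul,
    div_neg, hcc]

/-- **Growth rate of the bottom BPS invariants of the knot 5₂.**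
For `b r = (1/r²)·∑_{d ∣ r} μ(r/d)·(−1)^{d+1}·C(2d − 1, d − 1)`, the ratio
`b r / b (r+1)` tends to `−1/4` as `r → ∞`. -/
theorem five_two_bottom_bps_growth_rate (b : ℕ → ℝ)
    (hb : ∀ r : ℕ, 1 ≤ r → b r = (1 / (r : ℝ) ^ 2) *
      ∑ d ∈ r.divisors, (ArithmeticFunction.moebius (r / d) : ℝ) * (-1) ^ (d + 1) *
        (Nat.choose (2 * d - 1) (d - 1) : ℝ)) :
    Filter.Tendsto (fun r : ℕ => b r / b (r + 1)) Filter.atTop (nhds (-(1 / 4))) := by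
  have hu := uu_tendsto
  have h1 : Filter.Tendsto (fun r : ℕ => uu r / uu (r + 1)) Filter.atTop (nhds 1) := by
    have h2 : Filter.Tendsto (fun r : ℕ => uu (r + 1)) Filter.atTop (nhds 1) :=
      hu.comp (Filter.tendsto_add_atTop_nat 1)
    simpa [Pi.div_def] using hu.div h2 one_ne_zero
  have hinv : Filter.Tendsto (fun r : ℕ => 1 / (r : ℝ)) Filter.atTop (nhds 0) :=
    tendsto_one_div_atTop_nhds_zero_nat
  have hnum : Filter.Tendsto (fun r : ℕ => 1 + 1 / (r : ℝ)) Filter.atTop (nhds 1) := by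
    simpa using (tendsto_const_nhds (x := (1 : ℝ))).add hinv
  have hden : Filter.Tendsto (fun r : ℕ => 4 + 2 * (1 / (r : ℝ))) Filter.atTop (nhds 4) := by
    simpa using (tendsto_const_nhds (x := (4 : ℝ))).add (hinv.const_mul 2)
  have hP : Filter.Tendsto (fun r : ℕ => ((r : ℝ) + 1) / (2 * (2 * (r : ℝ) + 1)))
      Filter.atTop (nhds (1 / 4)) := by
    refine Filter.Tendsto.congr' ?_ (hnum.div hden (by norm_num))
    filter_upwards [Filter.eventually_ge_atTop 1] with r hr
    have hr0 : (r : ℝ) ≠ 0 := by positivity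
    simp only [Pi.div_apply]
    rw [div_eq_div_iff (by positivity) (by positivity)]
    linear_combination (2 : ℝ) * div_self hr0
  have hQ : Filter.Tendsto (fun r : ℕ => (((r : ℝ) + 1) / (r : ℝ)) ^ 2)
      Filter.atTop (nhds 1) := by
    refine Filter.Tendsto.congr' ?_ (by simpa using hnum.pow 2)
    filter_upwards [Filter.eventually_ge_atTop 1] with r hr
    have hr0 : (r : ℝ) ≠ 0 := by positivity
    rw [← one_div, one_add_div hr0]
  have hmain : Filter.Tendsto (fun r : ℕ => (uu r / uu (r + 1)) *
      (-(((r : ℝ) + 1) / (2 * (2 * (r : ℝ) + 1)))) * (((r : ℝ) + 1) / (r : ℝ)) ^ 2)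
      Filter.atTop (nhds (-(1 / 4))) := by
    have := (h1.mul hP.neg).mul hQ
    simpa using this
  refine Filter.Tendsto.congr' ?_ hmain
  filter_upwards [Filter.eventually_ge_atTop 1] with r hr
  have hr0 : (r : ℝ) ≠ 0 := by positivity
  rw [hb r hr, hb (r + 1) (by omega)]
  have e1 : (∑ d ∈ r.divisors, (ArithmeticFunction.moebius (r / d) : ℝ) * (-1) ^ (d + 1) *
      (Nat.choose (2 * d - 1) (d - 1) : ℝ)) = Fsum r := rfl
  have e2 : (∑ d ∈ (r + 1).divisors, (ArithmeticFunction.moebius ((r + 1) / d) : ℝ) *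
      (-1) ^ (d + 1) * (Nat.choose (2 * d - 1) (d - 1) : ℝ)) = Fsum (r + 1) := rfl
  rw [e1, e2,
    show (1 / (r : ℝ) ^ 2) * Fsum r = Fsum r / (r : ℝ) ^ 2 from by ring,
    show (1 / ((r + 1 : ℕ) : ℝ) ^ 2) * Fsum (r + 1) = Fsum (r + 1) / ((r : ℝ) + 1) ^ 2 from by
      push_cast; ring,
    div_div_div_comm, F_eq_mul r, F_eq_mul (r + 1), mul_div_mul_comm, S_ratio r hr,
    div_div_eq_mul_div, mul_div_assoc, ← div_pow]
end

section
/- Define b : ℕ → ℝ by b(r) := (1/r²)·∑_{d ∣ r} μ(r/d)·(−1)^d·C(6d − 1, d − 1) for r ≥ 1. Then the ratio b(r)/b(r+1) tends to −5⁵/6⁶ = −3125/46656 as r → ∞. (This is the exponential growth rate of the top BPS invariants of the knot 5₂, matching the zero x₀ = −5⁵/6⁶ of the Y-discriminant x⁴(5⁵ + 6⁶x) of its top extremal A-polynomial 1 − Y − x·Y⁶.) -/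
/-!
Write `c d = C(6d - 1, d - 1)`. In the Möbius sum for `r` the divisor `d = r` contributes
`(-1)^r c r`, and every other divisor has `2d ≤ r`. Since `c (d + 1) ≥ 6 c d`, each of those
at most `r` terms is bounded by `c r / 2^r`, so the sum is `(-1)^r c r (1 + O(r / 2^r))`.
Finally `c (m + 1) / c (m + 2) = (1/6) ∏_{i<5} (5m + 6 + i) / (6m + 7 + i) → 5⁵/6⁶`, and the
alternating sign turns this into the limit `-5⁵/6⁶` of the ratio.
-/

open Filter Finset Topology

def topCoeff (d : ℕ) : ℕ := (6 * d - 1).choose (d - 1)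

lemma topCoeff_pos (d : ℕ) : 0 < topCoeff d := Nat.choose_pos (by omega)

lemma choose_add_mul_prod (n k j : ℕ) :
    (n + k + j).choose k * ∏ i ∈ range j, (n + 1 + i) =
      (n + k).choose k * ∏ i ∈ range j, (n + k + 1 + i) := by
  induction j with
  | zero => simp
  | succ j ih =>
    have step := Nat.choose_mul_succ_eq (n + k + j) k
    rw [show n + k + j + 1 - k = n + 1 + j by omega] at step
    rw [prod_range_succ, prod_range_succ, ← mul_assoc, ← mul_assoc, ← ih,
      show n + k + (j + 1) = n + k + j + 1 by ring, show n + k + 1 + j = n + k + j + 1 by ring,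
      mul_right_comm, ← step, mul_right_comm]

lemma choose_six_mul_add_six (m : ℕ) : (6 * m + 6).choose (m + 1) = 6 * (6 * m + 5).choose m := by
  have h := Nat.add_one_mul_choose_eq (6 * m + 5) m
  refine Nat.eq_of_mul_eq_mul_right (Nat.succ_pos m) ?_
  linarith

lemma topCoeff_add_two_mul_prod (m : ℕ) :
    topCoeff (m + 2) * ∏ i ∈ range 5, (5 * m + 6 + i) =
      6 * topCoeff (m + 1) * ∏ i ∈ range 5, (6 * m + 7 + i) := by
  have h := choose_add_mul_prod (5 * m + 5) (m + 1) 5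
  rw [show 5 * m + 5 + (m + 1) = 6 * m + 6 by ring, choose_six_mul_add_six] at h
  simp only [topCoeff]
  rw [show 6 * (m + 2) - 1 = 6 * m + 6 + 5 by omega, show 6 * (m + 1) - 1 = 6 * m + 5 by omega]
  simpa [add_assoc, mul_assoc] using h

lemma six_mul_topCoeff_le {d : ℕ} (hd : 1 ≤ d) : 6 * topCoeff d ≤ topCoeff (d + 1) := by
  obtain ⟨m, rfl⟩ : ∃ m, d = m + 1 := ⟨d - 1, by omega⟩
  have hP : 0 < ∏ i ∈ range 5, (5 * m + 6 + i) := prod_pos fun i _ => by omega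
  have hPQ : ∏ i ∈ range 5, (5 * m + 6 + i) ≤ ∏ i ∈ range 5, (6 * m + 7 + i) :=
    prod_le_prod' fun i _ => by omega
  refine Nat.le_of_mul_le_mul_right ?_ hP
  calc 6 * topCoeff (m + 1) * ∏ i ∈ range 5, (5 * m + 6 + i)
      ≤ 6 * topCoeff (m + 1) * ∏ i ∈ range 5, (6 * m + 7 + i) := Nat.mul_le_mul_left _ hPQ
    _ = topCoeff (m + 1 + 1) * ∏ i ∈ range 5, (5 * m + 6 + i) :=
        (topCoeff_add_two_mul_prod m).symm

lemma six_pow_mul_topCoeff_le {d : ℕ} (hd : 1 ≤ d) (k : ℕ) :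
    6 ^ k * topCoeff d ≤ topCoeff (d + k) := by
  induction k with
  | zero => simp
  | succ k ih =>
    calc 6 ^ (k + 1) * topCoeff d = 6 * (6 ^ k * topCoeff d) := by ring
      _ ≤ 6 * topCoeff (d + k) := Nat.mul_le_mul_left 6 ih
      _ ≤ topCoeff (d + k + 1) := six_mul_topCoeff_le (by omega)

lemma two_pow_mul_topCoeff_le {d r : ℕ} (hd : 1 ≤ d) (hdr : 2 * d ≤ r) :
    2 ^ r * topCoeff d ≤ topCoeff r := by
  obtain ⟨k, rfl⟩ : ∃ k, r = d + k := ⟨r - d, by omega⟩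
  calc 2 ^ (d + k) * topCoeff d ≤ 6 ^ k * topCoeff d := by
        refine Nat.mul_le_mul_right _ ?_
        calc 2 ^ (d + k) ≤ 2 ^ (2 * k) := Nat.pow_le_pow_right (by norm_num) (by omega)
          _ = 4 ^ k := by rw [pow_mul]; norm_num
          _ ≤ 6 ^ k := Nat.pow_le_pow_left (by norm_num) k
    _ ≤ topCoeff (d + k) := six_pow_mul_topCoeff_le hd k

lemma tendsto_topCoeff_div_topCoeff_succ :
    Tendsto (fun r => (topCoeff r : ℝ) / topCoeff (r + 1)) atTop (𝓝 (3125 / 46656)) := by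
  rw [← tendsto_add_atTop_iff_nat 1]
  have hfactor (i : ℕ) : Tendsto (fun m : ℕ => ((6 + i : ℝ) + 5 * m) / ((7 + i) + 6 * m))
      atTop (𝓝 (5 / 6)) :=
    tendsto_add_mul_div_add_mul_atTop_nhds _ _ _ (by norm_num)
  have hprod := (tendsto_finsetProd (range 5) fun i _ => hfactor i).const_mul (1 / 6)
  rw [prod_const, card_range, show (1 / 6 : ℝ) * (5 / 6) ^ 5 = 3125 / 46656 by norm_num] at hprod
  refine hprod.congr fun m => ?_
  have key : (topCoeff (m + 2) : ℝ) * ∏ i ∈ range 5, ((6 + i : ℝ) + 5 * m) =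
      6 * topCoeff (m + 1) * ∏ i ∈ range 5, ((7 + i : ℝ) + 6 * m) := by
    have := topCoeff_add_two_mul_prod m
    rw [← Nat.cast_inj (R := ℝ)] at this
    push_cast at this
    convert this using 3 <;> ring
  have hQ : ∏ i ∈ range 5, ((7 + i : ℝ) + 6 * m) ≠ 0 := prod_ne_zero_iff.mpr fun i _ => by positivity
  have hc : (topCoeff (m + 2) : ℝ) ≠ 0 := by exact_mod_cast (topCoeff_pos _).ne'
  rw [prod_div_distrib, show m + 1 + 1 = m + 2 from rfl, eq_div_iff hc]
  field_simp
  linear_combination key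

noncomputable def bpsSum (r : ℕ) : ℝ :=
  ∑ d ∈ r.divisors, (ArithmeticFunction.moebius (r / d) : ℝ) * (-1) ^ d * (topCoeff d : ℝ)

lemma two_mul_le_of_mem_properDivisors {d r : ℕ} (hr : r ≠ 0) (hd : d ∈ r.properDivisors) :
    2 * d ≤ r := by
  obtain ⟨k, hk, rfl⟩ := (Nat.mem_properDivisors_iff_exists hr).mp hd
  rw [mul_comm d]
  exact Nat.mul_le_mul_right d hk

lemma abs_bpsSum_sub_le {r : ℕ} (hr : r ≠ 0) :
    |bpsSum r - (-1) ^ r * topCoeff r| ≤ r * (topCoeff r / 2 ^ r) := by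
  have hterm (d : ℕ) (hd : d ∈ r.properDivisors) :
      |(ArithmeticFunction.moebius (r / d) : ℝ) * (-1) ^ d * (topCoeff d : ℝ)| ≤
        topCoeff r / 2 ^ r := by
    have hgrowth : (2 ^ r * topCoeff d : ℝ) ≤ topCoeff r := by
      exact_mod_cast two_pow_mul_topCoeff_le (Nat.pos_of_mem_properDivisors hd)
        (two_mul_le_of_mem_properDivisors hr hd)
    have hmu : |(ArithmeticFunction.moebius (r / d) : ℝ)| ≤ 1 := by
      exact_mod_cast ArithmeticFunction.abs_moebius_le_one
    rw [le_div_iff₀ (by positivity), abs_mul, abs_mul, abs_pow, abs_neg, abs_one, one_pow,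
      mul_one, Nat.abs_cast]
    nlinarith [mul_le_mul_of_nonneg_right hmu (by positivity : (0 : ℝ) ≤ topCoeff d * 2 ^ r)]
  have hcard : ((r.properDivisors).card : ℝ) ≤ r := by
    exact_mod_cast (card_le_card Nat.properDivisors_subset_divisors).trans
      (Nat.card_divisors_le_self r)
  rw [bpsSum, ← Nat.cons_self_properDivisors hr, sum_cons, Nat.div_self (Nat.pos_of_ne_zero hr),
    ArithmeticFunction.moebius_apply_one, Int.cast_one, one_mul, add_sub_cancel_left]
  calc _ ≤ _ := abs_sum_le_sum_abs _ _
    _ ≤ (r.properDivisors).card * (topCoeff r / 2 ^ r : ℝ) := by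
        simpa using sum_le_card_nsmul _ _ _ hterm
    _ ≤ r * (topCoeff r / 2 ^ r) := by gcongr

lemma tendsto_bpsSum_div_leadingTerm :
    Tendsto (fun r => bpsSum r / ((-1) ^ r * topCoeff r)) atTop (𝓝 1) := by
  have hbound : ∀ᶠ r : ℕ in atTop, ‖bpsSum r / ((-1) ^ r * topCoeff r) - 1‖ ≤ r / 2 ^ r := by
    filter_upwards [eventually_ne_atTop 0] with r hr
    have hc : (0 : ℝ) < topCoeff r := by exact_mod_cast topCoeff_pos r
    have hlead : (-1 : ℝ) ^ r * topCoeff r ≠ 0 := by positivity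
    rw [Real.norm_eq_abs, div_sub_one hlead, abs_div, abs_mul, abs_pow, abs_neg, abs_one, one_pow,
      one_mul, Nat.abs_cast, div_le_iff₀ hc]
    calc _ ≤ r * (topCoeff r / 2 ^ r : ℝ) := abs_bpsSum_sub_le hr
      _ = r / 2 ^ r * topCoeff r := by ring
  have hdecay : Tendsto (fun r : ℕ => (r : ℝ) / 2 ^ r) atTop (𝓝 0) := by
    simpa using tendsto_pow_const_div_const_pow_of_one_lt 1 (by norm_num : (1 : ℝ) < 2)
  simpa using (squeeze_zero_norm' hbound hdecay).add_const 1

lemma tendsto_bpsSum_div_bpsSum_succ :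
    Tendsto (fun r => bpsSum r / bpsSum (r + 1)) atTop (𝓝 (-(3125 / 46656))) := by
  set u : ℕ → ℝ := fun r => bpsSum r / ((-1) ^ r * topCoeff r)
  have hu : Tendsto u atTop (𝓝 1) := tendsto_bpsSum_div_leadingTerm
  have hlim := tendsto_topCoeff_div_topCoeff_succ.neg.mul
    (hu.div (hu.comp (tendsto_add_atTop_nat 1)) one_ne_zero)
  rw [div_one, mul_one] at hlim
  refine hlim.congr fun r => ?_
  have hlead (n : ℕ) : (-1 : ℝ) ^ n * topCoeff n ≠ 0 := by
    have := topCoeff_pos n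
    positivity
  have hsum (n : ℕ) : bpsSum n = (-1) ^ n * topCoeff n * u n := (mul_div_cancel₀ _ (hlead n)).symm
  rw [Pi.div_apply, Function.comp_apply, hsum r, hsum (r + 1), mul_div_mul_comm, pow_succ]
  have := hlead r
  field_simp

/-- **Growth rate of the top BPS invariants of the knot 5₂.**
For `b r = (1/r²)·∑_{d ∣ r} μ(r/d)·(−1)^d·C(6d − 1, d − 1)`, the ratio
`b r / b (r+1)` tends to `−5⁵/6⁶ = −3125/46656` as `r → ∞`. -/
theorem five_two_top_bps_growth_rate (b : ℕ → ℝ)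
    (hb : ∀ r : ℕ, 1 ≤ r → b r = (1 / (r : ℝ) ^ 2) *
      ∑ d ∈ r.divisors, (ArithmeticFunction.moebius (r / d) : ℝ) * (-1) ^ d *
        (Nat.choose (6 * d - 1) (d - 1) : ℝ)) :
    Filter.Tendsto (fun r : ℕ => b r / b (r + 1)) Filter.atTop
      (nhds (-(3125 / 46656))) := by
  have hscale : Tendsto (fun r : ℕ => (1 / (r : ℝ) ^ 2) / (1 / ((r + 1 : ℕ) : ℝ) ^ 2)) atTop
      (𝓝 1) := by
    have h := (tendsto_add_mul_div_add_mul_atTop_nhds (1 : ℝ) 0 1 one_ne_zero).pow 2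
    rw [div_one, one_pow] at h
    refine h.congr' ?_
    filter_upwards [eventually_ne_atTop 0] with r hr
    field_simp
    push_cast
    ring
  have hlim := hscale.mul tendsto_bpsSum_div_bpsSum_succ
  rw [one_mul] at hlim
  refine hlim.congr' ?_
  filter_upwards [eventually_ge_atTop 1] with r hr
  rw [hb r hr, hb (r + 1) (by omega)]
  exact (mul_div_mul_comm _ _ _ _).symm
end

section
/- For every integer m ≥ 1, the formal power series ∑_{n≥1} C((m+1)n − 1, n − 1)·Xⁿ ∈ ℚ⟦X⟧ is algebraic over ℚ[X]. (This series equals X·Y′/Y for the Fuss–Catalan series Y = ∑_{n≥0} (1/(mn+1))·C((m+1)n, n)·Xⁿ, which satisfies Y = 1 + X·Y^{m+1}; both Y and X·Y′/Y are algebraic, as asserted for the extremal A-polynomials of twist knots.) -/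
open PowerSeries

namespace FCAux

def fq (m r n : ℕ) : ℚ :=
  if n = 0 then 1 else (r : ℚ) * (((m+1)*n + r).choose n) / ((m+1)*n + r)

def gq (m r n : ℕ) : ℚ := ((((m+1)*n + r).choose n : ℕ) : ℚ)

noncomputable def Gs (m r : ℕ) : ℚ⟦X⟧ := PowerSeries.mk (fq m r)
noncomputable def Ws (m r : ℕ) : ℚ⟦X⟧ := PowerSeries.mk (gq m r)

lemma absQ (M n : ℕ) (h : n ≤ M) :
    ((M.choose (n+1) : ℚ)) * (n+1) = (M.choose n) * ((M : ℚ) - n) := by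
  have h2 := Nat.choose_succ_right_eq M n
  have h3 : ((M.choose (n+1) * (n+1) : ℕ) : ℚ) = ((M.choose n * (M - n) : ℕ) : ℚ) := by
    exact_mod_cast congrArg (Nat.cast (R := ℚ)) h2
  push_cast [Nat.cast_sub h] at h3
  linarith

lemma pascalQ (M n : ℕ) :
    (((M+1).choose (n+1) : ℕ) : ℚ) = (M.choose n : ℚ) + (M.choose (n+1) : ℚ) := by
  exact_mod_cast congrArg (Nat.cast (R := ℚ)) (Nat.choose_succ_succ' M n)

lemma key_f (m r n : ℕ) : fq m (r+1) (n+1) = fq m r (n+1) + fq m (r+1+m) n := by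
  rcases n with _ | n
  · simp only [fq, if_neg one_ne_zero, if_pos rfl, Nat.choose_one_right, mul_one]
    have h1 : ((m:ℚ)+1+(r+1)) ≠ 0 := by positivity
    have h2 : ((m:ℚ)+1+r) ≠ 0 := by positivity
    push_cast
    field_simp
    simp only [Nat.choose_one_right]; push_cast; ring
  · have hNn : n + 1 ≤ (m+1)*(n+2) + r := by nlinarith
    have habs := absQ ((m+1)*(n+2) + r) (n+1) hNn
    have hps := pascalQ ((m+1)*(n+2) + r) (n+1)
    have hidx : (m+1)*(n+1) + (r+1+m) = (m+1)*(n+2) + r := by ring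
    have hidx2 : (m+1)*(n+2) + (r+1) = ((m+1)*(n+2) + r) + 1 := by ring
    simp only [fq, if_neg (Nat.succ_ne_zero _), hidx, hidx2]
    rw [hps]
    push_cast at habs ⊢
    have hd1 : ((m:ℚ)+1)*((n:ℚ)+1+1) + ((r:ℚ)+1) ≠ 0 := by positivity
    have hd2 : ((m:ℚ)+1)*((n:ℚ)+1+1) + (r:ℚ) ≠ 0 := by positivity
    have hd3 : ((m:ℚ)+1)*((n:ℚ)+1) + ((r:ℚ)+1+(m:ℚ)) ≠ 0 := by positivity
    field_simp
    linear_combination (((m:ℚ)+1) * (((m:ℚ)+1)*((n:ℚ)+2) + (r:ℚ))) * habs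

lemma key_g (m r n : ℕ) : gq m (r+1) (n+1) = gq m r (n+1) + gq m (r+1+m) n := by
  simp only [gq]
  have h1 : (m+1)*(n+1) + (r+1) = ((m+1)*(n+1) + r) + 1 := by ring
  have h2 : (m+1)*n + (r+1+m) = (m+1)*(n+1) + r := by ring
  rw [h1, h2, Nat.choose_succ_succ']
  push_cast
  ring

lemma Gs_shift (m r : ℕ) : Gs m (r+1) = Gs m r + PowerSeries.X * Gs m (r+1+m) := by
  ext n
  rcases n with _ | n
  · simp [Gs, fq, coeff_zero_eq_constantCoeff, map_add, map_mul]
  · simp only [Gs, coeff_mk, map_add, coeff_succ_X_mul]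
    exact key_f m r n

lemma Ws_shift (m r : ℕ) : Ws m (r+1) = Ws m r + PowerSeries.X * Ws m (r+1+m) := by
  ext n
  rcases n with _ | n
  · simp [Ws, gq, coeff_zero_eq_constantCoeff, map_add, map_mul]
  · simp only [Ws, coeff_mk, map_add, coeff_succ_X_mul]
    exact key_g m r n

lemma Gs_zero (m : ℕ) : Gs m 0 = 1 := by
  ext n
  rcases n with _ | n
  · simp [Gs, fq, coeff_zero_eq_constantCoeff]
  · simp [Gs, fq, coeff_one]

lemma coeff_zero_Gs (m r : ℕ) : (constantCoeff) (Gs m r) = 1 := by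
  rw [← coeff_zero_eq_constantCoeff_apply]; simp [Gs, fq]

lemma coeff_zero_Ws (m r : ℕ) : (constantCoeff) (Ws m r) = 1 := by
  rw [← coeff_zero_eq_constantCoeff_apply]; simp [Ws, gq]

lemma Gs_mul_aux (m : ℕ) : ∀ n r, (PowerSeries.coeff n) (Gs m (r+1) - Gs m r * Gs m 1) = 0 := by
  intro n
  induction n with
  | zero =>
    intro r
    simp only [map_sub, coeff_zero_eq_constantCoeff, map_mul]
    have h1 : (constantCoeff) (Gs m (r+1)) = 1 := coeff_zero_Gs m (r+1)
    have h2 : (constantCoeff) (Gs m r) = 1 := coeff_zero_Gs m r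
    have h3 : (constantCoeff) (Gs m 1) = 1 := coeff_zero_Gs m 1
    rw [h1, h2, h3]; ring
  | succ n ih =>
    intro r
    induction r with
    | zero =>
      rw [Gs_zero, one_mul, sub_self, map_zero]
    | succ r ihr =>
      have e : Gs m (r+1+1) - Gs m (r+1) * Gs m 1
          = (Gs m (r+1) - Gs m r * Gs m 1)
            + PowerSeries.X * (Gs m (r+1+m+1) - Gs m (r+1+m) * Gs m 1) := by
        have e1 := Gs_shift m (r+1)
        have e2 := Gs_shift m r
        have hix : r+1+1+m = r+1+m+1 := by ring
        rw [hix] at e1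
        rw [e1, e2]; ring
      rw [e, map_add, ihr, coeff_succ_X_mul, ih (r+1+m), add_zero]

lemma Gs_succ (m r : ℕ) : Gs m (r+1) = Gs m r * Gs m 1 := by
  have h : Gs m (r+1) - Gs m r * Gs m 1 = 0 := by
    ext n; rw [map_zero]; exact Gs_mul_aux m n r
  exact sub_eq_zero.mp h

lemma Gs_pow (m : ℕ) : ∀ r, Gs m r = (Gs m 1)^r := by
  intro r
  induction r with
  | zero => rw [Gs_zero, pow_zero]
  | succ r ih => rw [Gs_succ, ih, pow_succ]

lemma Ws_mul_aux (m : ℕ) : ∀ n s, (PowerSeries.coeff n) (Ws m s - Ws m 0 * Gs m s) = 0 := by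
  intro n
  induction n with
  | zero =>
    intro s
    simp only [map_sub, coeff_zero_eq_constantCoeff, map_mul]
    have h1 : (constantCoeff) (Ws m s) = 1 := coeff_zero_Ws m s
    have h2 : (constantCoeff) (Ws m 0) = 1 := coeff_zero_Ws m 0
    have h3 : (constantCoeff) (Gs m s) = 1 := coeff_zero_Gs m s
    rw [h1, h2, h3]; ring
  | succ n ih =>
    intro s
    induction s with
    | zero =>
      rw [Gs_zero, mul_one, sub_self, map_zero]
    | succ s ihs =>
      have e : Ws m (s+1) - Ws m 0 * Gs m (s+1)
          = (Ws m s - Ws m 0 * Gs m s)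
            + PowerSeries.X * (Ws m (s+1+m) - Ws m 0 * Gs m (s+1+m)) := by
        rw [Ws_shift m s, Gs_shift m s]; ring
      rw [e, map_add, ihs, coeff_succ_X_mul, ih (s+1+m), add_zero]

lemma Ws_one (m : ℕ) : Ws m 1 = Ws m 0 * Gs m 1 := by
  have h : Ws m 1 - Ws m 0 * Gs m 1 = 0 := by
    ext n; rw [map_zero]; exact Ws_mul_aux m n 1
  exact sub_eq_zero.mp h

lemma lin (m : ℕ) :
    (PowerSeries.C (m:ℚ) + 1) * Ws m 0 - PowerSeries.C (m:ℚ) * Ws m 1 = Gs m 1 := by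
  ext n
  simp only [map_sub, add_mul, one_mul, map_add, coeff_C_mul]
  rcases n with _ | n
  · simp only [Ws, Gs, coeff_zero_eq_constantCoeff, constantCoeff_mk]
    simp [gq, fq]
  · simp only [Ws, Gs, coeff_mk]
    have hnN : n ≤ (m+1)*(n+1) := by nlinarith
    have habs := absQ ((m+1)*(n+1)) n hnN
    have hps := pascalQ ((m+1)*(n+1)) n
    have h1 : (m+1)*(n+1) + 1 = ((m+1)*(n+1)) + 1 := by ring
    simp only [gq, fq, if_neg (Nat.succ_ne_zero _), Nat.add_zero, h1, one_mul]
    rw [hps]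
    push_cast at habs ⊢
    rw [eq_div_iff (by positivity : ((m:ℚ)+1)*((n:ℚ)+1) + 1 ≠ 0)]
    linear_combination ((m:ℚ)+1) * habs

lemma choose_step (m n : ℕ) :
    ((((m+1)*(n+1)).choose (n+1) : ℕ) : ℚ)
      = ((m:ℚ)+1) * ((((m+1)*(n+1) - 1).choose n : ℕ) : ℚ) := by
  have hM : (m+1)*(n+1) = ((m+1)*n+m) + 1 := by ring
  rw [hM, Nat.succ_sub_one]
  have hnM : n ≤ (m+1)*n+m := by nlinarith
  have habs := absQ ((m+1)*n+m) n hnM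
  have hps := pascalQ ((m+1)*n+m) n
  push_cast at habs
  have hn1 : ((n:ℚ)+1) ≠ 0 := by positivity
  refine mul_right_cancel₀ hn1 ?_
  rw [hps]
  linear_combination habs

end FCAux

/-- For every `m ≥ 1`, the series `∑_{n≥1} C((m+1)n − 1, n − 1)·Xⁿ` (which equals
`X·Y′/Y` for the Fuss–Catalan series `Y`) is algebraic over `ℚ[X]`. -/
theorem fussCatalan_log_derivative_algebraic (m : ℕ) (hm : 1 ≤ m) :
    IsAlgebraic (Polynomial ℚ)
      (PowerSeries.mk fun n => if n = 0 then 0 else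
        (Nat.choose ((m + 1) * n - 1) (n - 1) : ℚ)) := by
  classical
  set h : ℚ⟦X⟧ := PowerSeries.mk fun n => if n = 0 then 0 else
        (Nat.choose ((m + 1) * n - 1) (n - 1) : ℚ) with hh
  set cm : ℚ⟦X⟧ := PowerSeries.C (m:ℚ) with hcmdef
  set B : ℚ⟦X⟧ := FCAux.Gs m 1 with hBdef
  set W : ℚ⟦X⟧ := FCAux.Ws m 0 with hWdef
  have hXB : PowerSeries.X * B^(m+1) = B - 1 := by
    have e := FCAux.Gs_shift m 0
    rw [FCAux.Gs_zero] at e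
    rw [FCAux.Gs_pow m (0+1+m)] at e
    rw [show (0+1+m) = m+1 by omega] at e
    norm_num at e
    rw [hBdef]
    linear_combination -e
  have hW1 : FCAux.Ws m 1 = W * B := FCAux.Ws_one m
  have hlin : (cm + 1) * W - cm * FCAux.Ws m 1 = B := FCAux.lin m
  have hKey : (cm + 1) * W = B * (1 + cm * W) := by
    linear_combination hlin + cm * hW1
  have hconst_h : (constantCoeff) h = 0 := by
    rw [hh, ← coeff_zero_eq_constantCoeff_apply, coeff_mk]
    simp
  have hW0 : W = 1 + (cm + 1) * h := by
    ext n
    rcases n with _ | n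
    · simp only [coeff_zero_eq_constantCoeff, map_add, map_mul, map_one]
      rw [FCAux.coeff_zero_Ws m 0, hconst_h]
      simp
    · simp only [hWdef, FCAux.Ws, coeff_mk, map_add, coeff_one, hcmdef, add_mul, one_mul,
        coeff_C_mul, hh, PowerSeries.coeff_mk, if_neg (Nat.succ_ne_zero n)]
    -- goal now numeric
      have hstep := FCAux.choose_step m n
      simp only [FCAux.gq, Nat.add_zero, Nat.succ_sub_one] at hstep ⊢
      rw [show m*(n+1)+(n+1)-1 = (m+1)*(n+1)-1 by rw [add_mul m 1 (n+1), one_mul]]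
      linear_combination hstep
  have hcne : (cm + 1) ≠ 0 := by
    intro hz
    have := congrArg (constantCoeff) hz
    simp [hcmdef] at this
    have : ((m:ℚ) + 1) = 0 := by linarith [this]
    have hmn : (0:ℚ) < (m:ℚ) + 1 := by positivity
    linarith
  have h1 : (B - 1) * (1 + cm * W) = (cm + 1) * h := by
    linear_combination hW0 - hKey
  have h2 : 1 + cm * W = (cm + 1) * (1 + cm * h) := by
    linear_combination cm * hW0
  have hpow : ((cm + 1) * W)^(m+1) = B^(m+1) * (1 + cm * W)^(m+1) := by
    rw [hKey, mul_pow]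
  have hbig : (cm+1)^(m+1) * (PowerSeries.X * (1 + (cm+1) * h)^(m+1))
      = (cm+1)^(m+1) * (h * (1 + cm * h)^m) := by
    calc (cm+1)^(m+1) * (PowerSeries.X * (1 + (cm+1) * h)^(m+1))
        = PowerSeries.X * ((cm+1) * (1 + (cm+1)*h))^(m+1) := by rw [mul_pow]; ring
      _ = PowerSeries.X * ((cm+1) * W)^(m+1) := by rw [← hW0]
      _ = PowerSeries.X * (B^(m+1) * (1 + cm*W)^(m+1)) := by rw [hpow]
      _ = (PowerSeries.X * B^(m+1)) * (1 + cm*W)^(m+1) := by ring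
      _ = (B - 1) * (1 + cm*W)^(m+1) := by rw [hXB]
      _ = ((B-1) * (1 + cm*W)) * (1 + cm*W)^m := by rw [pow_succ]; ring
      _ = ((cm+1)*h) * ((cm+1) * (1 + cm*h))^m := by rw [h1, h2]
      _ = (cm+1)^(m+1) * (h * (1 + cm*h)^m) := by rw [mul_pow, pow_succ]; ring
  have hcancel : PowerSeries.X * (1 + (cm+1) * h)^(m+1) = h * (1 + cm * h)^m :=
    mul_left_cancel₀ (pow_ne_zero _ hcne) hbig
  refine ⟨Polynomial.C Polynomial.X *
      (1 + Polynomial.C (Polynomial.C ((m:ℚ)+1)) * Polynomial.X)^(m+1)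
      - Polynomial.X * (1 + Polynomial.C (Polynomial.C ((m:ℚ))) * Polynomial.X)^m, ?_, ?_⟩
  · intro hzero
    have := congrArg (Polynomial.eval 0) hzero
    simp at this
  · simp only [map_sub, map_mul, map_add, map_pow, map_one,
      Polynomial.aeval_X, Polynomial.aeval_C]
    have hax : algebraMap (Polynomial ℚ) (PowerSeries ℚ) Polynomial.X = PowerSeries.X := by
      rw [PowerSeries.algebraMap_apply']; simp
    have hac : algebraMap (Polynomial ℚ) (PowerSeries ℚ) (Polynomial.C ((m:ℚ)))
        = PowerSeries.C ((m:ℚ)) := by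
      rw [PowerSeries.algebraMap_apply', Polynomial.coe_C]
      ext k
      simp [PowerSeries.coeff_C]
    rw [hax, hac, ← hcmdef]
    linear_combination hcancel
end
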